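/- arXiv:2510.13472 — 7 statements merged into one kernel-verified Lean document; each statement's English description precedes it below -/
import Mathlib

section
/- With the hypotheses of the generalized Fibonacci setting (p positive integer, q, l integers, l ≥ 1−m, p²+4q>0, p²+2q−2 < p√(p²+4q), c₁ ≠ 0, W_{mk+l} ≠ 0 for k ≥ n₀), we have lim_{n→∞} [ (∑_{k=n}^∞ 1/W_{mk+l}²)^{-1} − ( W_{mn+l}² − W_{m(n−1)+l}² + 2c₁c₂(−q)^{mn+l}(1 − (−q)^{−m} − (α^{2m}−1)²/(α^m(α^{3m}−β^m))) ) ] = 0. -/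
/-!
By Binet, `W j = c₁ αʲ - c₂ βʲ` with `α ≥ 1 > |β|`. For `α > 1` write
`W (N + m k) = c₁ α^(N + m k) (1 - δ σᵏ)` with `σ = (β / α)ᵐ` and `δ = (c₂ / c₁) (β / α)ᴺ → 0`.
With `ρ = α^(-2m)` the tail sum is `(c₁ αᴺ)⁻² Φ(δ)`, where
`Φ(δ) = ∑ ρᵏ (1 - δ σᵏ)⁻² = 1 / (1 - ρ) + 2 δ / (1 - ρ σ) + O(δ²)`. Inverting,
`1 / tail = c₁² α^(2N) ((1 - ρ) - 2 (1 - ρ)² δ / (1 - ρ σ)) + O(β^(2N))`; expanding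
`W_N² - W_{N-m}²` by Binet, this is the claimed expression up to `c₂² (β^(2N) - β^(2N-2m)) → 0`,
the constant `(α^(2m) - 1)² / (α^m (α^(3m) - β^m))` being `(1 - ρ)² / (1 - ρ σ)`.
If `α = 1` (that is `p = 1`, `q = 0`) the series diverges and the remaining terms tend to `0`.
-/

open Filter Topology Asymptotics

lemma abs_inv_one_sub_sq_sub_le {e : ℝ} (he : |e| ≤ 1 / 2) :
    |((1 - e) ^ 2)⁻¹ - 1 - 2 * e| ≤ 16 * e ^ 2 := by
  obtain ⟨he₁, he₂⟩ := abs_le.mp he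
  have hpos : 1 / 4 ≤ (1 - e) ^ 2 := by nlinarith
  have hid : ((1 - e) ^ 2)⁻¹ - 1 - 2 * e = e ^ 2 * (3 - 2 * e) / (1 - e) ^ 2 := by
    field_simp [show 1 - e ≠ 0 by linarith]
    ring
  have h3 : 0 ≤ 3 - 2 * e := by linarith
  rw [hid, abs_of_nonneg (by positivity), div_le_iff₀ (by linarith)]
  nlinarith [sq_nonneg e]

noncomputable def invSqSeries (ρ σ δ : ℝ) : ℝ := ∑' k : ℕ, ρ ^ k / (1 - δ * σ ^ k) ^ 2

lemma isBigO_invSqSeries_sub {ρ σ : ℝ} (hρ₀ : 0 ≤ ρ) (hρ₁ : ρ < 1) (hσ : |σ| ≤ 1) :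
    (fun δ => invSqSeries ρ σ δ - ((1 - ρ)⁻¹ + 2 * (1 - ρ * σ)⁻¹ * δ)) =O[𝓝 0] fun δ => δ ^ 2 := by
  refine IsBigO.of_bound (16 * (1 - ρ)⁻¹) ?_
  filter_upwards [Metric.closedBall_mem_nhds (0 : ℝ) (by norm_num : (0 : ℝ) < 1 / 2)] with δ hδ
  rw [Metric.mem_closedBall, dist_zero_right, Real.norm_eq_abs] at hδ
  set E : ℕ → ℝ := fun k => ρ ^ k / (1 - δ * σ ^ k) ^ 2 - ρ ^ k - 2 * δ * (ρ * σ) ^ k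
  have hσk : ∀ k : ℕ, |σ ^ k| ≤ 1 := fun k => by rw [abs_pow]; exact pow_le_one₀ (abs_nonneg σ) hσ
  have hE : ∀ k, ‖E k‖ ≤ 16 * δ ^ 2 * ρ ^ k := fun k => by
    have hek : |δ * σ ^ k| ≤ |δ| := by
      rw [abs_mul]; exact mul_le_of_le_one_right (abs_nonneg δ) (hσk k)
    have hsq : (δ * σ ^ k) ^ 2 ≤ δ ^ 2 := by
      rw [← sq_abs, ← sq_abs δ]; exact pow_le_pow_left₀ (abs_nonneg _) hek 2
    have h := abs_inv_one_sub_sq_sub_le (hek.trans hδ)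
    calc ‖E k‖ = ρ ^ k * |((1 - δ * σ ^ k) ^ 2)⁻¹ - 1 - 2 * (δ * σ ^ k)| := by
          rw [Real.norm_eq_abs, ← abs_of_nonneg (pow_nonneg hρ₀ k), ← abs_mul]
          congr 1
          simp only [E]
          ring
      _ ≤ ρ ^ k * (16 * δ ^ 2) := by gcongr; linarith
      _ = 16 * δ ^ 2 * ρ ^ k := by ring
  have hgeom := (hasSum_geometric_of_lt_one hρ₀ hρ₁).mul_left (16 * δ ^ 2)
  have hρσ : |ρ * σ| < 1 := by
    rw [abs_mul, abs_of_nonneg hρ₀]; nlinarith [abs_nonneg σ]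
  have hsum : HasSum (fun k : ℕ => ρ ^ k / (1 - δ * σ ^ k) ^ 2)
      ((1 - ρ)⁻¹ + 2 * (1 - ρ * σ)⁻¹ * δ + ∑' k, E k) := by
    convert ((hasSum_geometric_of_lt_one hρ₀ hρ₁).add
      ((hasSum_geometric_of_abs_lt_one hρσ).mul_left (2 * δ))).add
      (Summable.of_norm_bounded hgeom.summable hE).hasSum using 1
    · funext k
      simp only [E]
      ring
    · ring
  rw [invSqSeries, hsum.tsum_eq, add_sub_cancel_left, Real.norm_eq_abs (δ ^ 2), abs_of_nonneg (sq_nonneg δ)]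
  calc ‖∑' k, E k‖ ≤ 16 * δ ^ 2 * (1 - ρ)⁻¹ := tsum_of_norm_bounded hgeom hE
    _ = 16 * (1 - ρ)⁻¹ * δ ^ 2 := by ring

lemma isBigO_inv_sub_of_isBigO_sub {𝕜 : Type*} [NormedField 𝕜] {f : 𝕜 → 𝕜} {A B : 𝕜}
    (hA : A ≠ 0) (hf : (fun δ => f δ - (A⁻¹ + B * δ)) =O[𝓝 0] fun δ => δ ^ 2) :
    (fun δ => (f δ)⁻¹ - (A - A ^ 2 * B * δ)) =O[𝓝 0] fun δ => δ ^ 2 := by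
  have hsq : Tendsto (fun δ : 𝕜 => δ ^ 2) (𝓝 0) (𝓝 0) := by
    simpa using ((continuous_pow 2).tendsto (0 : 𝕜))
  have hlin : Tendsto (fun δ : 𝕜 => A⁻¹ + B * δ) (𝓝 0) (𝓝 A⁻¹) := by
    simpa using ((tendsto_id (x := 𝓝 (0 : 𝕜))).const_mul B).const_add A⁻¹
  have hlim : Tendsto f (𝓝 0) (𝓝 A⁻¹) := by
    simpa using (hf.trans_tendsto hsq).add hlin
  have hinv : (fun δ => (f δ)⁻¹) =O[𝓝 0] fun _ => (1 : 𝕜) :=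
    (hlim.inv₀ (inv_ne_zero hA)).isBigO_one 𝕜
  have hnum : (fun δ => A * ((A * B * δ - 1) * (f δ - (A⁻¹ + B * δ)) + A * B ^ 2 * δ ^ 2))
      =O[𝓝 0] fun δ => δ ^ 2 := by
    have hcoef : (fun δ : 𝕜 => A * B * δ - 1) =O[𝓝 0] fun _ => (1 : 𝕜) :=
      ((continuous_const.mul continuous_id).sub continuous_const).tendsto 0 |>.isBigO_one 𝕜
    refine IsBigO.const_mul_left ?_ _
    refine IsBigO.add ?_ ((isBigO_refl _ _).const_mul_left _)
    simpa using hcoef.mul hf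
  have heq : (fun δ => (f δ)⁻¹ - (A - A ^ 2 * B * δ)) =ᶠ[𝓝 0]
      fun δ => (f δ)⁻¹ * (A * ((A * B * δ - 1) * (f δ - (A⁻¹ + B * δ)) + A * B ^ 2 * δ ^ 2)) := by
    filter_upwards [hlim.eventually_ne (inv_ne_zero hA)] with δ hδ
    field_simp
    ring
  simpa using (hinv.mul hnum).congr' heq.symm EventuallyEq.rfl

theorem eq_binet_of_recurrence {p q α β : ℝ} {W : ℕ → ℝ}
    (hrec : ∀ n, W (n + 2) = p * W (n + 1) + q * W n) (hα : α ^ 2 = p * α + q)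
    (hβ : β ^ 2 = p * β + q) (hαβ : α ≠ β) (n : ℕ) :
    W n = (W 1 - W 0 * β) / (α - β) * α ^ n - (W 1 - W 0 * α) / (α - β) * β ^ n := by
  have hαβ' : α - β ≠ 0 := sub_ne_zero.mpr hαβ
  induction n using Nat.twoStepInduction with
  | zero => field_simp; ring
  | one => field_simp; ring
  | more n ih₀ ih₁ =>
    rw [hrec, ih₀, ih₁]
    linear_combination (-(W 1 - W 0 * β) / (α - β) * α ^ n) * hα +
      (W 1 - W 0 * α) / (α - β) * β ^ n * hβ

lemma tsum_one_div_binet_sq {α β c₁ c₂ : ℝ} (hα : α ≠ 0) (hc₁ : c₁ ≠ 0) (N m : ℕ) :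
    ∑' k : ℕ, 1 / (c₁ * α ^ (N + m * k) - c₂ * β ^ (N + m * k)) ^ 2 =
      (c₁ ^ 2 * α ^ (2 * N))⁻¹ *
        invSqSeries (α ^ (2 * m))⁻¹ ((β / α) ^ m) (c₂ / c₁ * (β / α) ^ N) := by
  rw [invSqSeries, ← tsum_mul_left]
  refine tsum_congr fun k => ?_
  have h : c₁ * α ^ (N + m * k) - c₂ * β ^ (N + m * k) =
      c₁ * α ^ N * (α ^ m) ^ k * (1 - c₂ / c₁ * (β / α) ^ N * ((β / α) ^ m) ^ k) := by
    simp only [pow_add, pow_mul, div_pow]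
    field_simp
  rw [h]
  generalize 1 - c₂ / c₁ * (β / α) ^ N * ((β / α) ^ m) ^ k = t
  ring

lemma one_sub_sq_div_one_sub_mul_eq {α β : ℝ} {m : ℕ} (hα : α ≠ 0) (h : α ^ (3 * m) ≠ β ^ m) :
    (1 - (α ^ (2 * m))⁻¹) ^ 2 * (1 - (α ^ (2 * m))⁻¹ * (β / α) ^ m)⁻¹ =
      (α ^ (2 * m) - 1) ^ 2 / (α ^ m * (α ^ (3 * m) - β ^ m)) := by
  have h' : α ^ (3 * m) - β ^ m ≠ 0 := sub_ne_zero.mpr h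
  have hρσ : (α ^ (2 * m))⁻¹ * (β / α) ^ m = β ^ m / α ^ (3 * m) := by
    rw [div_pow]
    field_simp
    ring
  rw [hρσ]
  field_simp
  ring

lemma inv_tsum_binet_sub_eq {α β c₁ c₂ ρ σ δ : ℝ} {m M : ℕ} {w : ℕ → ℝ}
    (hw : ∀ j, w j = c₁ * α ^ j - c₂ * β ^ j) (hα : 1 < α) (hβ : |β| < 1) (hc₁ : c₁ ≠ 0)
    (hm : 0 < m) (hM : 0 < M) (hρ : ρ = (α ^ (2 * m))⁻¹) (hσ : σ = (β / α) ^ m)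
    (hδ : δ = c₂ / c₁ * (β / α) ^ (M + m)) :
    (∑' k : ℕ, 1 / w (M + m + m * k) ^ 2)⁻¹ -
      (w (M + m) ^ 2 - w M ^ 2 + 2 * c₁ * c₂ * (α * β) ^ (M + m) *
        (1 - (α * β) ^ (-(m : ℤ)) - (α ^ (2 * m) - 1) ^ 2 / (α ^ m * (α ^ (3 * m) - β ^ m)))) =
      c₁ ^ 2 * α ^ (2 * (M + m)) *
        ((invSqSeries ρ σ δ)⁻¹ - (1 - ρ - (1 - ρ) ^ 2 * (2 * (1 - ρ * σ)⁻¹) * δ)) -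
      c₂ ^ 2 * (β ^ (2 * (M + m)) - β ^ (2 * M)) := by
  have hα₀ : 0 < α := zero_lt_one.trans hα
  have hshift : (α * β) ^ (M + m) * (α * β) ^ (-(m : ℤ)) = (α * β) ^ M := by
    rw [← zpow_natCast, ← zpow_add' (Or.inr (Or.inl (by omega))), ← zpow_natCast]
    push_cast
    ring_nf
  have hcancel : α ^ (2 * (M + m)) * ρ = α ^ (2 * M) := by
    rw [hρ, mul_add, pow_add, mul_inv_cancel_right₀ (by positivity)]
  have hlin : c₁ ^ 2 * α ^ (2 * (M + m)) * δ = c₁ * c₂ * (α * β) ^ (M + m) := by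
    rw [hδ, div_pow, mul_pow]
    field_simp
    ring
  have hβα : β ^ m < α ^ (3 * m) := calc
    β ^ m ≤ |β| ^ m := by rw [← abs_pow]; exact le_abs_self _
    _ < 1 := pow_lt_one₀ (abs_nonneg β) hβ (by omega)
    _ < α ^ (3 * m) := one_lt_pow₀ hα (by omega)
  have hD := one_sub_sq_div_one_sub_mul_eq hα₀.ne' hβα.ne'
  simp only [hw]
  rw [tsum_one_div_binet_sq hα₀.ne' hc₁, mul_inv, inv_inv, ← hρ, ← hσ, ← hδ]
  rw [← hρ, ← hσ] at hD
  linear_combination 2 * c₁ * c₂ * hshift - c₁ ^ 2 * hcancel -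
    (1 - ρ) ^ 2 * (2 * (1 - ρ * σ)⁻¹) * hlin - 2 * c₁ * c₂ * (α * β) ^ (M + m) * hD

theorem tendsto_inv_tsum_binet_of_one_lt {α β c₁ c₂ : ℝ} {m : ℕ} {w : ℕ → ℝ}
    (hw : ∀ j, w j = c₁ * α ^ j - c₂ * β ^ j) (hα : 1 < α) (hβ : |β| < 1) (hc₁ : c₁ ≠ 0)
    (hm : 0 < m) :
    Tendsto (fun N : ℕ => (∑' k : ℕ, 1 / w (N + m * k) ^ 2)⁻¹ -
      (w N ^ 2 - w (N - m) ^ 2 + 2 * c₁ * c₂ * (α * β) ^ N *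
        (1 - (α * β) ^ (-(m : ℤ)) - (α ^ (2 * m) - 1) ^ 2 / (α ^ m * (α ^ (3 * m) - β ^ m)))))
      atTop (𝓝 0) := by
  have hα₀ : 0 < α := zero_lt_one.trans hα
  set ρ : ℝ := (α ^ (2 * m))⁻¹ with hρ
  set σ : ℝ := (β / α) ^ m with hσ
  set δ : ℕ → ℝ := fun N => c₂ / c₁ * (β / α) ^ N with hδ
  have hγ : |β / α| < 1 := by
    rw [abs_div, abs_of_pos hα₀, div_lt_one hα₀]; linarith
  have hρ₁ : ρ < 1 := inv_lt_one_of_one_lt₀ (one_lt_pow₀ hα (by omega))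
  have hσ₁ : |σ| ≤ 1 := by rw [hσ, abs_pow]; exact pow_le_one₀ (abs_nonneg _) hγ.le
  have hexp := isBigO_inv_sub_of_isBigO_sub (sub_ne_zero.mpr hρ₁.ne')
    (isBigO_invSqSeries_sub (by positivity) hρ₁ hσ₁)
  have hδ₀ : Tendsto δ atTop (𝓝 0) := by
    simpa using (tendsto_pow_atTop_nhds_zero_of_abs_lt_one hγ).const_mul (c₂ / c₁)
  have hβ2 : Tendsto (fun N : ℕ => (β ^ 2) ^ N) atTop (𝓝 0) :=
    tendsto_pow_atTop_nhds_zero_of_abs_lt_one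
      (by rw [abs_pow]; exact pow_lt_one₀ (abs_nonneg β) hβ two_ne_zero)
  have hsmall : Tendsto (fun N : ℕ => c₁ ^ 2 * α ^ (2 * N) * δ N ^ 2) atTop (𝓝 0) := by
    convert hβ2.const_mul (c₂ ^ 2) using 2 with N
    · simp only [hδ, div_pow]
      field_simp
      ring
    · simp
  have hmain := ((isBigO_refl (fun N : ℕ => c₁ ^ 2 * α ^ (2 * N)) atTop).mul
    (hexp.comp_tendsto hδ₀)).trans_tendsto hsmall
  have hβm : Tendsto (fun N : ℕ => c₂ ^ 2 * (β ^ (2 * N) - β ^ (2 * (N - m)))) atTop (𝓝 0) := by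
    simpa [pow_mul] using (hβ2.sub (hβ2.comp (tendsto_sub_atTop_nat m))).const_mul (c₂ ^ 2)
  rw [← sub_zero (0 : ℝ)]
  refine (hmain.sub hβm).congr' ?_
  filter_upwards [eventually_gt_atTop m] with N hN
  obtain ⟨M, rfl⟩ : ∃ M, N = M + m := ⟨N - m, by omega⟩
  rw [Nat.add_sub_cancel]
  exact (inv_tsum_binet_sub_eq hw hα hβ hc₁ hm (by omega) hρ hσ rfl).symm

theorem tendsto_inv_tsum_binet_of_eq_one {α β c₁ c₂ : ℝ} {m : ℕ} {w : ℕ → ℝ}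
    (hw : ∀ j, w j = c₁ * α ^ j - c₂ * β ^ j) (hα : α = 1) (hβ : |β| < 1) (hc₁ : c₁ ≠ 0)
    (hm : 0 < m) :
    Tendsto (fun N : ℕ => (∑' k : ℕ, 1 / w (N + m * k) ^ 2)⁻¹ -
      (w N ^ 2 - w (N - m) ^ 2 + 2 * c₁ * c₂ * (α * β) ^ N *
        (1 - (α * β) ^ (-(m : ℤ)) - (α ^ (2 * m) - 1) ^ 2 / (α ^ m * (α ^ (3 * m) - β ^ m)))))
      atTop (𝓝 0) := by
  subst hα
  have hβN := tendsto_pow_atTop_nhds_zero_of_abs_lt_one hβ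
  have hwc : Tendsto w atTop (𝓝 c₁) := by
    simpa [funext hw] using (hβN.const_mul c₂).const_sub c₁
  -- the series diverges, so its `tsum` is `0` by convention
  have htsum : ∀ N, ∑' k : ℕ, 1 / w (N + m * k) ^ 2 = 0 := fun N => by
    refine tsum_eq_zero_of_not_summable fun hs => ?_
    have hk : Tendsto (fun k => N + m * k) atTop atTop :=
      tendsto_atTop_mono (fun k => le_add_left (Nat.le_mul_of_pos_left k hm)) tendsto_id
    have h : Tendsto (fun k => 1 / w (N + m * k) ^ 2) atTop (𝓝 (1 / c₁ ^ 2)) :=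
      tendsto_const_nhds.div ((hwc.comp hk).pow 2) (pow_ne_zero 2 hc₁)
    exact one_div_ne_zero (pow_ne_zero 2 hc₁) (tendsto_nhds_unique h hs.tendsto_atTop_zero)
  have hlim := ((hwc.pow 2).sub ((hwc.comp (tendsto_sub_atTop_nat m)).pow 2)).add
    ((hβN.const_mul (2 * c₁ * c₂)).mul_const
      (1 - (1 * β) ^ (-(m : ℤ)) - (1 ^ (2 * m) - 1) ^ 2 / (1 ^ m * (1 ^ (3 * m) - β ^ m))))
  simp only [htsum, inv_zero, zero_sub]
  simpa using hlim.neg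

theorem tendsto_inv_tsum_binet {α β c₁ c₂ : ℝ} {m : ℕ} {w : ℕ → ℝ}
    (hw : ∀ j, w j = c₁ * α ^ j - c₂ * β ^ j) (hα : 1 ≤ α) (hβ : |β| < 1) (hc₁ : c₁ ≠ 0)
    (hm : 0 < m) :
    Tendsto (fun N : ℕ => (∑' k : ℕ, 1 / w (N + m * k) ^ 2)⁻¹ -
      (w N ^ 2 - w (N - m) ^ 2 + 2 * c₁ * c₂ * (α * β) ^ N *
        (1 - (α * β) ^ (-(m : ℤ)) - (α ^ (2 * m) - 1) ^ 2 / (α ^ m * (α ^ (3 * m) - β ^ m)))))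
      atTop (𝓝 0) := by
  rcases hα.lt_or_eq with hα | hα
  · exact tendsto_inv_tsum_binet_of_one_lt hw hα hβ hc₁ hm
  · exact tendsto_inv_tsum_binet_of_eq_one hw hα.symm hβ hc₁ hm

lemma abs_sub_sqrt_div_two_lt_one {p q : ℝ} (hD : 0 ≤ p ^ 2 + 4 * q)
    (h : p ^ 2 + 2 * q - 2 < p * Real.sqrt (p ^ 2 + 4 * q)) :
    |(p - Real.sqrt (p ^ 2 + 4 * q)) / 2| < 1 := by
  have hs := Real.sq_sqrt hD
  rw [← sq_lt_one_iff_abs_lt_one]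
  nlinarith

lemma tendsto_toNat_mul_add_atTop {m : ℕ} (hm : 0 < m) (l : ℤ) :
    Tendsto (fun n : ℕ => ((m : ℤ) * n + l).toNat) atTop atTop := by
  refine tendsto_atTop_mono (fun n => ?_) (tendsto_sub_atTop_nat l.natAbs)
  have : (n : ℤ) ≤ m * n := le_mul_of_one_le_left (by positivity) (by exact_mod_cast hm)
  omega

theorem horadam_reciprocal_square_tail_asymptotic_general
    (a b p q : ℤ) (hp : 0 < p) (m : ℕ) (hm : 0 < m) (l : ℤ)
    (hD : 0 < p ^ 2 + 4 * q)
    (hcond : (p : ℝ) ^ 2 + 2 * q - 2 < p * Real.sqrt ((p : ℝ) ^ 2 + 4 * q))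
    (W : ℕ → ℤ) (hW0 : W 0 = a) (hW1 : W 1 = b)
    (hWrec : ∀ n, 2 ≤ n → W n = p * W (n - 1) + q * W (n - 2))
    (α β c₁ c₂ : ℝ)
    (hα : α = ((p : ℝ) + Real.sqrt ((p : ℝ) ^ 2 + 4 * q)) / 2)
    (hβ : β = ((p : ℝ) - Real.sqrt ((p : ℝ) ^ 2 + 4 * q)) / 2)
    (hc₁ : c₁ = ((b : ℝ) - a * β) / (α - β))
    (hc₂ : c₂ = ((b : ℝ) - a * α) / (α - β))
    (hc₁ne : c₁ ≠ 0) :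
    Filter.Tendsto
      (fun n : ℕ =>
        (∑' k : ℕ, (1 : ℝ) / (W ((m : ℤ) * ((n : ℤ) + (k : ℤ)) + l).toNat : ℝ) ^ 2)⁻¹ -
          ((W ((m : ℤ) * (n : ℤ) + l).toNat : ℝ) ^ 2 -
            (W ((m : ℤ) * ((n : ℤ) - 1) + l).toNat : ℝ) ^ 2 +
            2 * c₁ * c₂ * ((-q : ℝ)) ^ ((m : ℤ) * (n : ℤ) + l) *
              (1 - ((-q : ℝ)) ^ (-(m : ℤ)) -
                (α ^ (2 * m) - 1) ^ 2 / (α ^ m * (α ^ (3 * m) - β ^ m)))))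
      Filter.atTop (nhds 0) := by
  set s := Real.sqrt ((p : ℝ) ^ 2 + 4 * q)
  have hD' : (1 : ℝ) ≤ (p : ℝ) ^ 2 + 4 * q := by exact_mod_cast hD
  have hs₂ : s ^ 2 = (p : ℝ) ^ 2 + 4 * q := Real.sq_sqrt (by linarith)
  have hαβ : α * β = -q := by rw [hα, hβ]; linear_combination (-1 / 4 : ℝ) * hs₂
  have hs₁ : 1 ≤ s := Real.one_le_sqrt.mpr hD'
  have hα₁ : 1 ≤ α := by
    rw [hα]
    linarith [(by exact_mod_cast hp : (1 : ℝ) ≤ p)]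
  have hβ₁ : |β| < 1 := hβ ▸ abs_sub_sqrt_div_two_lt_one (by linarith) hcond
  have hBinet : ∀ j, (W j : ℝ) = c₁ * α ^ j - c₂ * β ^ j := by
    intro j
    rw [eq_binet_of_recurrence (W := fun j => (W j : ℝ)) (p := p) (q := q) (α := α) (β := β)
      (fun n => by exact_mod_cast hWrec (n + 2) (by omega))
      (by rw [hα]; linear_combination hs₂ / 4) (by rw [hβ]; linear_combination hs₂ / 4)
      (by rw [hα, hβ]; linarith), hW0, hW1, hc₁, hc₂]
  refine ((tendsto_inv_tsum_binet hBinet hα₁ hβ₁ hc₁ne hm).comp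
    (tendsto_toNat_mul_add_atTop hm l)).congr' ?_
  filter_upwards [eventually_ge_atTop (l.natAbs + 1)] with n hn
  have hmn : (n : ℤ) ≤ m * n := le_mul_of_one_le_left (by positivity) (by exact_mod_cast hm)
  obtain ⟨N, hN⟩ : ∃ N : ℕ, (N : ℤ) = m * n + l := ⟨_, Int.toNat_of_nonneg (by omega)⟩
  have hshift : ∀ k : ℕ, ((m : ℤ) * ((n : ℤ) + (k : ℤ)) + l).toNat = N + m * k := fun k => by
    rw [mul_add]
    omega
  have hprev : ((m : ℤ) * ((n : ℤ) - 1) + l).toNat = N - m := by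
    rw [mul_sub, mul_one]
    omega
  simp only [Function.comp, hshift, hprev, ← hN, Int.toNat_natCast, zpow_natCast, ← hαβ]

theorem horadam_reciprocal_square_tail_asymptotic
    (a b p q : ℤ) (hp : 0 < p) (m : ℕ) (hm : 0 < m) (l : ℤ) (hl : 1 - (m : ℤ) ≤ l)
    (hD : 0 < p ^ 2 + 4 * q)
    (hcond : (p : ℝ) ^ 2 + 2 * q - 2 < p * Real.sqrt ((p : ℝ) ^ 2 + 4 * q))
    (W : ℕ → ℤ) (hW0 : W 0 = a) (hW1 : W 1 = b)
    (hWrec : ∀ n, 2 ≤ n → W n = p * W (n - 1) + q * W (n - 2))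
    (α β c₁ c₂ : ℝ)
    (hα : α = ((p : ℝ) + Real.sqrt ((p : ℝ) ^ 2 + 4 * q)) / 2)
    (hβ : β = ((p : ℝ) - Real.sqrt ((p : ℝ) ^ 2 + 4 * q)) / 2)
    (hc₁ : c₁ = ((b : ℝ) - a * β) / (α - β))
    (hc₂ : c₂ = ((b : ℝ) - a * α) / (α - β))
    (hc₁ne : c₁ ≠ 0)
    (hWne : ∃ n₀ : ℕ, ∀ k ≥ n₀, W ((m : ℤ) * (k : ℤ) + l).toNat ≠ 0) :
    Filter.Tendsto
      (fun n : ℕ =>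
        (∑' k : ℕ, (1 : ℝ) / (W ((m : ℤ) * ((n : ℤ) + (k : ℤ)) + l).toNat : ℝ) ^ 2)⁻¹ -
          ((W ((m : ℤ) * (n : ℤ) + l).toNat : ℝ) ^ 2 -
            (W ((m : ℤ) * ((n : ℤ) - 1) + l).toNat : ℝ) ^ 2 +
            2 * c₁ * c₂ * ((-q : ℝ)) ^ ((m : ℤ) * (n : ℤ) + l) *
              (1 - ((-q : ℝ)) ^ (-(m : ℤ)) -
                (α ^ (2 * m) - 1) ^ 2 / (α ^ m * (α ^ (3 * m) - β ^ m)))))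
      Filter.atTop (nhds 0) :=
  horadam_reciprocal_square_tail_asymptotic_general a b p q hp m hm l hD hcond W hW0 hW1 hWrec α β
    c₁ c₂ hα hβ hc₁ hc₂ hc₁ne
end

section
/- For the Fibonacci sequence Fₙ (F₀=0, F₁=1), lim_{n→∞} [ (∑_{k=n}^∞ 1/F_k)^{-1} − F_{n−2} ] = 0. -/
/-!
Rearranging Cassini's identity gives
`1/F(m+1) - 1/F(m+2) - 1/F(m+3) = ±1 / (F(m+1) F(m+2) F(m+3))`.
Summed over `m ≥ n` the left side telescopes to `1/F(n+1) - T(n+3)`, where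
`T(n) = ∑_{k ≥ n} 1/F(k)`, and bounding `F(m+1) F(m+2) ≥ F(n+1) F(n+2)` on the right gives
`|1/F(n+1) - T(n+3)| ≤ T(n+3) / (F(n+1) F(n+2))`.
Inverting, `|T(n+3)⁻¹ - F(n+1)| ≤ 1/F(n+2) → 0`.
-/

open Filter Real
open scoped goldenRatio

lemma abs_inv_sub_le_of_abs_inv_sub_le {x t δ : ℝ} (hx : 0 < x) (ht : 0 < t)
    (h : |x⁻¹ - t| ≤ δ * t / x) : |t⁻¹ - x| ≤ δ :=
  calc |t⁻¹ - x| = x * |x⁻¹ - t| / t := by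
        rw [show t⁻¹ - x = x * (x⁻¹ - t) / t by field_simp, abs_div, abs_mul, abs_of_pos hx,
          abs_of_pos ht]
    _ ≤ x * (δ * t / x) / t := by gcongr
    _ = δ := by field_simp

noncomputable def fibRecipTail (n : ℕ) : ℝ := ∑' k : ℕ, (1 : ℝ) / Nat.fib (n + k)

lemma cast_fib_add_one_pos (n : ℕ) : (0 : ℝ) < Nat.fib (n + 1) := by
  exact_mod_cast Nat.fib_pos.mpr n.succ_pos

lemma summable_one_div_fib : Summable fun k : ℕ ↦ (1 : ℝ) / Nat.fib k := by
  refine summable_of_ratio_test_tendsto_lt_one (l := -ψ) ?_ ?_ ?_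
  · linarith [neg_one_lt_goldenConj]
  · filter_upwards [eventually_gt_atTop 0] with k hk
    simpa using hk.ne'
  · exact tendsto_fib_div_fib_succ_atTop.congr fun k ↦ by simp [div_eq_mul_inv, mul_comm]

lemma summable_one_div_fib_add (n : ℕ) :
    Summable fun k : ℕ ↦ (1 : ℝ) / Nat.fib (n + k) := by
  simpa only [add_comm n] using (summable_nat_add_iff n).mpr summable_one_div_fib

lemma fibRecipTail_pos (n : ℕ) : 0 < fibRecipTail (n + 1) :=
  (summable_one_div_fib_add _).tsum_pos (fun _ ↦ by positivity) 0 (by simp [Nat.fib_pos])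

lemma fibRecipTail_eq_add_fibRecipTail_succ (n : ℕ) :
    fibRecipTail n = 1 / Nat.fib n + fibRecipTail (n + 1) := by
  simp only [fibRecipTail, (summable_one_div_fib_add n).tsum_eq_zero_add, add_zero,
    add_assoc, add_comm 1]

lemma fib_mul_fib_add_three_sub (m : ℕ) :
    (Nat.fib m * Nat.fib (m + 3) - Nat.fib (m + 1) * Nat.fib (m + 2) : ℝ) = (-1) ^ (m + 1) := by
  have cassini := Int.fib_succ_mul_fib_pred_sub_fib_sq ((m + 1 : ℕ) : ℤ)
  rw [show ((m + 1 : ℕ) : ℤ) + 1 = (m + 2 : ℕ) by push_cast; ring,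
    show ((m + 1 : ℕ) : ℤ) - 1 = (m : ℕ) by push_cast; ring, Int.natAbs_natCast] at cassini
  simp only [Int.fib_natCast] at cassini
  have cassiniR : (Nat.fib (m + 2) * Nat.fib m - Nat.fib (m + 1) ^ 2 : ℝ) = (-1) ^ (m + 1) := by
    exact_mod_cast cassini
  have h2 : (Nat.fib (m + 2) : ℝ) = Nat.fib m + Nat.fib (m + 1) := by
    exact_mod_cast Nat.fib_add_two
  have h3 : (Nat.fib (m + 3) : ℝ) = Nat.fib (m + 1) + Nat.fib (m + 2) := by
    exact_mod_cast Nat.fib_add_two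
  linear_combination cassiniR + (Nat.fib m : ℝ) * h3 - (Nat.fib (m + 1) : ℝ) * h2

lemma abs_one_div_fib_sub_sub (m : ℕ) :
    |(1 / Nat.fib (m + 1) - 1 / Nat.fib (m + 2) - 1 / Nat.fib (m + 3) : ℝ)|
      = 1 / (Nat.fib (m + 1) * Nat.fib (m + 2) * Nat.fib (m + 3)) := by
  have := cast_fib_add_one_pos m
  have := cast_fib_add_one_pos (m + 1)
  have := cast_fib_add_one_pos (m + 2)
  have h2 : (Nat.fib (m + 2) : ℝ) = Nat.fib m + Nat.fib (m + 1) := by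
    exact_mod_cast Nat.fib_add_two
  have key : (1 / Nat.fib (m + 1) - 1 / Nat.fib (m + 2) - 1 / Nat.fib (m + 3) : ℝ)
      = (-1) ^ (m + 1) / (Nat.fib (m + 1) * Nat.fib (m + 2) * Nat.fib (m + 3)) := by
    rw [← fib_mul_fib_add_three_sub]
    field_simp
    linear_combination (Nat.fib (m + 3) : ℝ) * h2
  rw [key, abs_div, abs_pow, abs_neg, abs_one, one_pow, abs_of_pos (by positivity)]

lemma one_div_fib_sub_fibRecipTail_eq_tsum (n : ℕ) :
    1 / Nat.fib (n + 1) - fibRecipTail (n + 3) = ∑' j : ℕ,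
      (1 / Nat.fib (n + 1 + j) - 1 / Nat.fib (n + 2 + j) - 1 / Nat.fib (n + 3 + j) : ℝ) := by
  have h := summable_one_div_fib_add
  rw [Summable.tsum_sub ((h _).sub (h _)) (h _), Summable.tsum_sub (h _) (h _)]
  change _ = fibRecipTail (n + 1) - fibRecipTail (n + 2) - fibRecipTail (n + 3)
  rw [fibRecipTail_eq_add_fibRecipTail_succ (n + 1)]
  ring

lemma abs_one_div_fib_sub_fibRecipTail_le (n : ℕ) :
    |1 / Nat.fib (n + 1) - fibRecipTail (n + 3)|
      ≤ fibRecipTail (n + 3) / (Nat.fib (n + 1) * Nat.fib (n + 2)) := by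
  have := cast_fib_add_one_pos n
  have := cast_fib_add_one_pos (n + 1)
  rw [one_div_fib_sub_fibRecipTail_eq_tsum, ← Real.norm_eq_abs]
  refine tsum_of_norm_bounded ((summable_one_div_fib_add (n + 3)).hasSum.div_const _) fun j ↦ ?_
  rw [Real.norm_eq_abs, add_right_comm n 1 j, add_right_comm n 2 j, add_right_comm n 3 j,
      abs_one_div_fib_sub_sub, div_div, mul_comm (Nat.fib (n + j + 3) : ℝ)]
  have := cast_fib_add_one_pos (n + j + 2)
  gcongr <;> omega

lemma abs_inv_fibRecipTail_sub_fib_le (n : ℕ) :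
    |(fibRecipTail (n + 3))⁻¹ - Nat.fib (n + 1)| ≤ 1 / Nat.fib (n + 2) := by
  refine abs_inv_sub_le_of_abs_inv_sub_le (cast_fib_add_one_pos n) (fibRecipTail_pos (n + 2)) ?_
  rw [← one_div]
  convert abs_one_div_fib_sub_fibRecipTail_le n using 1
  field_simp

theorem fib_reciprocal_tail_asymptotic :
    Filter.Tendsto
      (fun n : ℕ => (∑' k : ℕ, (1 : ℝ) / Nat.fib (n + k))⁻¹ - (Nat.fib (n - 2) : ℝ))
      Filter.atTop (nhds 0) := by
  rw [← tendsto_add_atTop_iff_nat 3]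
  exact squeeze_zero_norm (fun n ↦ abs_inv_fibRecipTail_sub_fib_le n)
    (summable_one_div_fib.tendsto_atTop_zero.comp (tendsto_add_atTop_nat 2))
end

section
/- For the Fibonacci sequence Fₙ and positive integers m, l with l ≤ m−1, lim_{n→∞} [ (∑_{k=n}^∞ 1/F_{mk−l})^{-1} − (F_{mn−l} − F_{m(n−1)−l}) ] = 0. -/
/-!
By Binet's formula, `1 / F j = √5 φ⁻¹ ^ j + (ψ / φ) ^ j / F j`, so `1 / F j` is `√5 φ⁻¹ ^ j` up to a
relative error `φ⁻¹ ^ (2 j)`. Hence the tail `∑ₖ 1 / F (b + m (k + 1))` is the geometric series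
`√5 / (φ ^ (b + m) - φ ^ b)` up to a relative error `φ⁻¹ ^ (2 (b + m))`, and its reciprocal is
`(φ ^ (b + m) - φ ^ b) / √5 + O(φ⁻¹ ^ b)`, which is `F (b + m) - F b + O(φ⁻¹ ^ b)` by Binet again.
-/

open Real goldenRatio

theorem abs_inv_sub_inv_le_of_abs_sub_le_mul {S T ε : ℝ} (hT : 0 < T) (hε : 0 ≤ ε)
    (h : |S - T| ≤ ε * S) : |S⁻¹ - T⁻¹| ≤ ε / T := by
  have hS : 0 < S := by
    have : T ≤ (1 + ε) * S := by linarith [neg_abs_le (S - T)]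
    exact pos_of_mul_pos_right (hT.trans_le this) (by linarith)
  rw [inv_sub_inv hS.ne' hT.ne', abs_div, abs_sub_comm, abs_of_pos (mul_pos hS hT),
    div_le_div_iff₀ (mul_pos hS hT) hT]
  nlinarith

theorem abs_tsum_sub_le_mul_tsum {f g : ℕ → ℝ} {t ε : ℝ} (hε : ε < 1) (hg : HasSum g t)
    (hf : ∀ k, 0 ≤ f k) (h : ∀ k, |f k - g k| ≤ ε * f k) :
    |∑' k, f k - t| ≤ ε * ∑' k, f k := by
  have hfs : Summable f := by
    refine .of_nonneg_of_le hf (fun k => ?_) (hg.summable.mul_left (1 - ε)⁻¹)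
    rw [le_inv_mul_iff₀ (by linarith)]
    linarith [le_abs_self (f k - g k), h k]
  rw [← hg.tsum_eq, ← hfs.tsum_sub hg.summable, ← tsum_mul_left, abs_le]
  constructor
  · rw [← tsum_neg]
    exact Summable.tsum_le_tsum (fun k => by linarith [neg_abs_le (f k - g k), h k])
      (hfs.mul_left ε).neg (hfs.sub hg.summable)
  · exact Summable.tsum_le_tsum (fun k => by linarith [le_abs_self (f k - g k), h k])
      (hfs.sub hg.summable) (hfs.mul_left ε)

theorem hasSum_inv_pow_add_mul_succ {x : ℝ} (hx : 1 < x) (b : ℕ) {m : ℕ} (hm : m ≠ 0) :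
    HasSum (fun k : ℕ => x⁻¹ ^ (b + m * (k + 1))) (x ^ (b + m) - x ^ b)⁻¹ := by
  have hx0 : 0 < x := by linarith
  have hq : x⁻¹ ^ m < 1 := pow_lt_one₀ (by positivity) (inv_lt_one_of_one_lt₀ hx) hm
  have hxm : 1 < x ^ m := one_lt_pow₀ hx hm
  have hsum : x⁻¹ ^ (b + m) * (1 - x⁻¹ ^ m)⁻¹ = (x ^ (b + m) - x ^ b)⁻¹ := by
    rw [inv_pow, inv_pow, pow_add]
    field_simp
  have hterm (k : ℕ) : x⁻¹ ^ (b + m * (k + 1)) = x⁻¹ ^ (b + m) * (x⁻¹ ^ m) ^ k := by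
    rw [← pow_mul, ← pow_add]
    ring_nf
  simp only [hterm, ← hsum]
  exact (hasSum_geometric_of_lt_one (by positivity) hq).mul_left _

theorem abs_goldenConj : |ψ| = φ⁻¹ := by
  rw [inv_goldenRatio, abs_of_neg goldenConj_neg]

theorem abs_fib_sub_goldenRatio_pow_div (j : ℕ) :
    |(Nat.fib j : ℝ) - φ ^ j / √5| = φ⁻¹ ^ j / √5 := by
  rw [coe_fib_eq, ← sub_div, sub_sub_cancel_left, abs_div, abs_neg, abs_pow, abs_goldenConj,
    abs_of_pos (by positivity : (0 : ℝ) < √5)]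

theorem abs_inv_fib_sub (j : ℕ) (hj : j ≠ 0) :
    |(Nat.fib j : ℝ)⁻¹ - √5 * φ⁻¹ ^ j| = φ⁻¹ ^ (2 * j) * (Nat.fib j : ℝ)⁻¹ := by
  have hF : (0 : ℝ) < Nat.fib j := by exact_mod_cast Nat.fib_pos.2 (Nat.pos_of_ne_zero hj)
  have binet : √5 * Nat.fib j = φ ^ j - ψ ^ j := by
    rw [coe_fib_eq]; field_simp
  have hφ : φ ^ j * φ⁻¹ ^ j = 1 := by rw [← mul_pow, mul_inv_cancel₀ goldenRatio_ne_zero, one_pow]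
  have hFinv : (Nat.fib j : ℝ) * (Nat.fib j : ℝ)⁻¹ = 1 := mul_inv_cancel₀ hF.ne'
  have : (Nat.fib j : ℝ)⁻¹ - √5 * φ⁻¹ ^ j = ψ ^ j * φ⁻¹ ^ j * (Nat.fib j : ℝ)⁻¹ := by
    linear_combination (-(Nat.fib j : ℝ)⁻¹) * hφ + (√5 * φ⁻¹ ^ j) * hFinv -
      (φ⁻¹ ^ j * (Nat.fib j : ℝ)⁻¹) * binet
  rw [this, abs_mul, abs_mul, abs_pow, abs_goldenConj,
    abs_of_pos (by positivity : (0 : ℝ) < φ⁻¹ ^ j), abs_of_pos (inv_pos.2 hF), ← pow_add, two_mul]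

theorem abs_inv_tsum_inv_fib_sub_le (b : ℕ) {m : ℕ} (hm : m ≠ 0) :
    |(∑' k : ℕ, (Nat.fib (b + m * (k + 1)) : ℝ)⁻¹)⁻¹ - (Nat.fib (b + m) - Nat.fib b)| ≤
      3 * φ⁻¹ ^ b := by
  have hr0 : (0 : ℝ) ≤ φ⁻¹ := by positivity
  have hr1 : φ⁻¹ < 1 := inv_lt_one_of_one_lt₀ one_lt_goldenRatio
  have h5 : (1 : ℝ) ≤ √5 := by rw [Real.one_le_sqrt]; norm_num
  set a := b + m
  set S := ∑' k : ℕ, (Nat.fib (b + m * (k + 1)) : ℝ)⁻¹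
  set T := √5 * (φ ^ a - φ ^ b)⁻¹
  have hgap : 0 < φ ^ a - φ ^ b := sub_pos.2 (pow_lt_pow_right₀ one_lt_goldenRatio (by omega))
  have hT : HasSum (fun k : ℕ => √5 * φ⁻¹ ^ (b + m * (k + 1))) T :=
    (hasSum_inv_pow_add_mul_succ one_lt_goldenRatio b hm).mul_left _
  have hST : |S - T| ≤ φ⁻¹ ^ (2 * a) * S := by
    refine abs_tsum_sub_le_mul_tsum (pow_lt_one₀ hr0 hr1 (by omega)) hT (fun k => by positivity)
      fun k => ?_
    rw [abs_inv_fib_sub _ (by positivity)]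
    refine mul_le_mul_of_nonneg_right (pow_le_pow_of_le_one hr0 hr1.le ?_) (by positivity)
    have := Nat.le_mul_of_pos_right m (Nat.add_one_pos k)
    omega
  have hSinv : |S⁻¹ - T⁻¹| ≤ φ⁻¹ ^ b := by
    have hinv : φ⁻¹ ^ a * φ ^ a = 1 := by
      rw [← mul_pow, inv_mul_cancel₀ goldenRatio_ne_zero, one_pow]
    refine (abs_inv_sub_inv_le_of_abs_sub_le_mul (by positivity) (by positivity) hST).trans ?_
    calc φ⁻¹ ^ (2 * a) / T = φ⁻¹ ^ a * (φ⁻¹ ^ a * (φ ^ a - φ ^ b)) / √5 := by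
          simp only [T, div_eq_mul_inv, mul_inv, inv_inv]; ring
      _ ≤ φ⁻¹ ^ a * 1 / 1 := by
          gcongr
          rw [mul_sub, hinv, sub_le_self_iff]
          positivity
      _ ≤ φ⁻¹ ^ b := by
          rw [mul_one, div_one]
          exact pow_le_pow_of_le_one hr0 hr1.le (by omega)
  have hTinv : |T⁻¹ - (Nat.fib a - Nat.fib b)| ≤ 2 * φ⁻¹ ^ b := by
    calc |T⁻¹ - (Nat.fib a - Nat.fib b)|
        = |((Nat.fib b : ℝ) - φ ^ b / √5) - ((Nat.fib a : ℝ) - φ ^ a / √5)| := by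
          simp only [T, mul_inv, inv_inv]; ring_nf
      _ ≤ |(Nat.fib b : ℝ) - φ ^ b / √5| + |(Nat.fib a : ℝ) - φ ^ a / √5| := abs_sub _ _
      _ = φ⁻¹ ^ b / √5 + φ⁻¹ ^ a / √5 := by
          rw [abs_fib_sub_goldenRatio_pow_div, abs_fib_sub_goldenRatio_pow_div]
      _ ≤ φ⁻¹ ^ b + φ⁻¹ ^ b := by
          gcongr
          · exact div_le_self (by positivity) h5
          · exact (div_le_self (by positivity) h5).trans
              (pow_le_pow_of_le_one hr0 hr1.le (by omega))
      _ = 2 * φ⁻¹ ^ b := by ring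
  calc _ ≤ |S⁻¹ - T⁻¹| + |T⁻¹ - (Nat.fib a - Nat.fib b)| := abs_sub_le _ _ _
    _ ≤ 3 * φ⁻¹ ^ b := by linarith

theorem fib_sub_reciprocal_tail_asymptotic_general (m l : ℕ) (hm : 0 < m)
    (hlm : l ≤ m - 1) :
    Filter.Tendsto
      (fun n : ℕ =>
        (∑' k : ℕ, (1 : ℝ) / Nat.fib (m * (n + k) - l))⁻¹ -
          ((Nat.fib (m * n - l) : ℝ) - (Nat.fib (m * (n - 1) - l) : ℝ)))
      Filter.atTop (nhds 0) := by
  rw [← Filter.tendsto_add_atTop_iff_nat 2]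
  have hr0 : (0 : ℝ) ≤ φ⁻¹ := by positivity
  have hr1 : φ⁻¹ < 1 := inv_lt_one_of_one_lt₀ one_lt_goldenRatio
  refine squeeze_zero_norm (a := fun p => 3 * φ⁻¹ ^ p) (fun p => ?_)
    (by simpa using (tendsto_pow_atTop_nhds_zero_of_lt_one hr0 hr1).const_mul 3)
  set b := m * (p + 1) - l
  have hmp : m * (p + 1) = m * p + m := by ring
  have hpb : p ≤ b := by
    have := Nat.le_mul_of_pos_left p hm
    omega
  have htail (k : ℕ) : m * (p + 2 + k) - l = b + m * (k + 1) := by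
    rw [show m * (p + 2 + k) = m * (p + 1) + m * (k + 1) by ring]
    omega
  have hhead : m * (p + 2) - l = b + m := by
    rw [show m * (p + 2) = m * (p + 1) + m by ring]
    omega
  simp only [htail, hhead, one_div, Real.norm_eq_abs]
  exact (abs_inv_tsum_inv_fib_sub_le b hm.ne').trans
    (mul_le_mul_of_nonneg_left (pow_le_pow_of_le_one hr0 hr1.le hpb) (by norm_num))

theorem fib_sub_reciprocal_tail_asymptotic (m l : ℕ) (hm : 0 < m) (hl : 0 < l)
    (hlm : l ≤ m - 1) :
    Filter.Tendsto
      (fun n : ℕ =>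
        (∑' k : ℕ, (1 : ℝ) / Nat.fib (m * (n + k) - l))⁻¹ -
          ((Nat.fib (m * n - l) : ℝ) - (Nat.fib (m * (n - 1) - l) : ℝ)))
      Filter.atTop (nhds 0) :=
  fib_sub_reciprocal_tail_asymptotic_general m l hm hlm
end

section
/- For the Fibonacci sequence Fₙ, lim_{n→∞} [ (∑_{k=n}^∞ 1/F_{3k}²)^{-1} − (F_{3n}² − F_{3n−3}² + (4/9)(−1)ⁿ) ] = 0. -/
/-!
Write `A n = F_{3n}² - F_{3n-3}² + (4/9)(-1)ⁿ` (`fibTailApprox n` below). From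
`F_{3n+3} = 4 F_{3n} + F_{3n-3}` and `F_{3n}² - 4 F_{3n} F_{3n-3} - F_{3n-3}² = 4 (-1)^{n-1}`
one gets the exact identity
`(A_{n+1} - A_n) F_{3n}² = A_n A_{n+1} + 1024/81` for `n ≥ 1`, i.e.
`1/A_n - 1/A_{n+1} = (1 + c/(A_n A_{n+1})) / F_{3n}²` with `c = 1024/81`. Telescoping, the tail
`S_n = ∑_{k ≥ n} 1/F_{3k}²` satisfies `0 ≤ 1 - A_n S_n ≤ c S_n / A_{n+1}`, so
`0 ≤ 1/S_n - A_n ≤ c / A_{n+1} → 0`.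
-/

open Filter Topology

namespace Nat

theorem fib_add_three (n : ℕ) : fib (n + 3) = 2 * fib (n + 1) + fib n := by
  simp only [fib_add_two]; ring

theorem fib_add_six (n : ℕ) : fib (n + 6) = 4 * fib (n + 3) + fib n := by
  simp only [fib_add_two]; ring

theorem fib_add_one_sq_sub_mul_sub_sq {R : Type*} [CommRing R] (n : ℕ) :
    (fib (n + 1) : R) ^ 2 - fib (n + 1) * fib n - fib n ^ 2 = (-1) ^ n := by
  induction n with
  | zero => simp
  | succ n ih =>
    rw [fib_add_two, Nat.cast_add]
    linear_combination (-1 : R) * ih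

theorem fib_add_three_sq_sub_mul_sub_sq {R : Type*} [CommRing R] (n : ℕ) :
    (fib (n + 3) : R) ^ 2 - 4 * fib (n + 3) * fib n - fib n ^ 2 = 4 * (-1) ^ n := by
  rw [fib_add_three, Nat.cast_add, Nat.cast_mul, Nat.cast_ofNat]
  linear_combination 4 * fib_add_one_sq_sub_mul_sub_sq (R := R) n

end Nat

theorem hasSum_inv_sub_inv_succ {a : ℕ → ℝ} (ha : ∀ k, 0 < a k) (ha_mono : Monotone a)
    (ha_top : Tendsto a atTop atTop) :
    HasSum (fun k => (a k)⁻¹ - (a (k + 1))⁻¹) (a 0)⁻¹ := by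
  refine (hasSum_iff_tendsto_nat_of_nonneg
    (fun k => sub_nonneg.2 (inv_anti₀ (ha k) (ha_mono k.le_succ))) _).2 ?_
  simp_rw [Finset.sum_range_sub']
  simpa using tendsto_const_nhds.sub (tendsto_inv_atTop_zero.comp ha_top)

theorem inv_tsum_sub_mem_Icc_of_telescoping {a f : ℕ → ℝ} {c : ℝ} (hc : 0 ≤ c)
    (ha : ∀ k, 0 < a k) (ha_top : Tendsto a atTop atTop) (hf : ∀ k, 0 < f k)
    (htel : ∀ k, a (k + 1) - a k = f k * (a k * a (k + 1) + c)) :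
    (∑' k, f k)⁻¹ - a 0 ∈ Set.Icc 0 (c / a 1) := by
  have ha0 := ha 0
  have ha1 := ha 1
  have ha_mono : Monotone a := monotone_nat_of_le_succ fun k => by
    have := htel k
    have := mul_nonneg (hf k).le (add_nonneg (mul_pos (ha k) (ha (k + 1))).le hc)
    linarith
  set d : ℕ → ℝ := fun k => c * f k / (a k * a (k + 1)) with hd
  have hd_nonneg (k : ℕ) : 0 ≤ d k := by
    have := ha k; have := ha (k + 1); have := hf k
    positivity
  have hd_le (k : ℕ) : d k ≤ c / (a 0 * a 1) * f k := by
    have := hf k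
    rw [div_mul_eq_mul_div]
    exact div_le_div_of_nonneg_left (by positivity) (by positivity)
      (mul_le_mul (ha_mono k.zero_le) (ha_mono (by omega)) (by positivity) (ha k).le)
  have hg_sum : HasSum (fun k => f k + d k) (a 0)⁻¹ := by
    refine (hasSum_inv_sub_inv_succ ha ha_mono ha_top).congr_fun fun k => ?_
    have := ha k; have := ha (k + 1)
    rw [hd]
    field_simp
    linear_combination -htel k
  have hf_sum : Summable f := Summable.of_nonneg_of_le (fun k => (hf k).le)
    (fun k => le_add_of_nonneg_right (hd_nonneg k)) hg_sum.summable
  have hd_sum : Summable d := Summable.of_nonneg_of_le hd_nonneg hd_le (hf_sum.mul_left _)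
  have hS : 0 < ∑' k, f k := hf_sum.tsum_pos (fun k => (hf k).le) 0 (hf 0)
  have hD : ∑' k, d k ≤ c / (a 0 * a 1) * ∑' k, f k :=
    (hd_sum.tsum_le_tsum hd_le (hf_sum.mul_left _)).trans_eq tsum_mul_left
  have hsplit : ∑' k, f k + ∑' k, d k = (a 0)⁻¹ :=
    (hf_sum.tsum_add hd_sum).symm.trans hg_sum.tsum_eq
  have hdefect : (∑' k, f k)⁻¹ - a 0 = a 0 * (∑' k, d k) / ∑' k, f k := by
    field_simp
    field_simp at hsplit
    linear_combination -hsplit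
  rw [hdefect]
  constructor
  · exact div_nonneg (mul_nonneg ha0.le (tsum_nonneg hd_nonneg)) hS.le
  · rw [div_le_iff₀ hS]
    calc a 0 * ∑' k, d k ≤ a 0 * (c / (a 0 * a 1) * ∑' k, f k) := by gcongr
      _ = c / a 1 * ∑' k, f k := by field_simp

noncomputable def fibTailApprox (n : ℕ) : ℝ :=
  (Nat.fib (3 * n) : ℝ) ^ 2 - (Nat.fib (3 * n - 3) : ℝ) ^ 2 + (4 / 9) * (-1 : ℝ) ^ n

theorem fib_three_mul_add_three_sq_sub_mul_sub_sq (m : ℕ) :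
    (Nat.fib (3 * m + 3) : ℝ) ^ 2 - 4 * Nat.fib (3 * m + 3) * Nat.fib (3 * m) -
      Nat.fib (3 * m) ^ 2 = 4 * (-1) ^ m := by
  rw [Nat.fib_add_three_sq_sub_mul_sub_sq, pow_mul]
  norm_num

theorem fibTailApprox_succ (m : ℕ) :
    fibTailApprox (m + 1) =
      4 * Nat.fib (3 * m) * Nat.fib (3 * m + 3) + 32 / 9 * (-1 : ℝ) ^ m := by
  rw [fibTailApprox, show 3 * (m + 1) - 3 = 3 * m by omega,
    show 3 * (m + 1) = 3 * m + 3 by ring]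
  linear_combination fib_three_mul_add_three_sq_sub_mul_sub_sq m

theorem natCast_fib_le_fibTailApprox (m : ℕ) :
    (Nat.fib (3 * m + 3) : ℝ) ≤ fibTailApprox (m + 1) := by
  have hp : (1 : ℝ) ≤ Nat.fib (3 * m + 1) := by exact_mod_cast Nat.fib_pos.2 (by omega)
  have hu : (0 : ℝ) ≤ Nat.fib (3 * m) := Nat.cast_nonneg _
  have hs : -1 ≤ (-1 : ℝ) ^ (m + 1) := by
    rcases neg_one_pow_eq_or ℝ (m + 1) with h | h <;> norm_num [h]
  rw [fibTailApprox, show 3 * (m + 1) - 3 = 3 * m by omega, show 3 * (m + 1) = 3 * m + 3 by ring,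
    Nat.fib_add_three]
  push_cast
  nlinarith

theorem tendsto_fibTailApprox_atTop : Tendsto fibTailApprox atTop atTop := by
  rw [← tendsto_add_atTop_iff_nat 1]
  refine tendsto_atTop_mono (fun m => ?_) tendsto_natCast_atTop_atTop
  have h := Nat.le_fib_add_one (3 * m + 3)
  calc (m : ℝ) ≤ Nat.fib (3 * m + 3) := by exact_mod_cast (show m ≤ _ by omega)
    _ ≤ fibTailApprox (m + 1) := natCast_fib_le_fibTailApprox m

theorem fibTailApprox_pos {n : ℕ} (hn : n ≠ 0) : 0 < fibTailApprox n := by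
  obtain ⟨m, rfl⟩ := Nat.exists_eq_add_one_of_ne_zero hn
  refine lt_of_lt_of_le ?_ (natCast_fib_le_fibTailApprox m)
  exact_mod_cast Nat.fib_pos.2 (by omega)

theorem fibTailApprox_succ_sub_mul_fib_sq {n : ℕ} (hn : n ≠ 0) :
    (fibTailApprox (n + 1) - fibTailApprox n) * (Nat.fib (3 * n) : ℝ) ^ 2 =
      fibTailApprox n * fibTailApprox (n + 1) + 1024 / 81 := by
  obtain ⟨m, rfl⟩ := Nat.exists_eq_add_one_of_ne_zero hn
  have h2 := fibTailApprox_succ (m + 1)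
  rw [show 3 * (m + 1) + 3 = 3 * m + 6 by ring, Nat.fib_add_six,
    show 3 * (m + 1) = 3 * m + 3 by ring] at h2
  rw [h2, fibTailApprox_succ, show 3 * (m + 1) = 3 * m + 3 by ring]
  push_cast
  have hs : ((-1 : ℝ) ^ m) ^ 2 = 1 := by rw [← pow_mul, mul_comm, pow_mul]; norm_num
  linear_combination 16 * (Nat.fib (3 * m + 3) : ℝ) ^ 2 *
    fib_three_mul_add_three_sq_sub_mul_sub_sq m + 1024 / 81 * hs

theorem inv_tsum_sub_fibTailApprox_mem_Icc {n : ℕ} (hn : n ≠ 0) :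
    (∑' k : ℕ, (1 : ℝ) / (Nat.fib (3 * (n + k)) : ℝ) ^ 2)⁻¹ - fibTailApprox n ∈
      Set.Icc 0 (1024 / 81 / fibTailApprox (n + 1)) := by
  have hfib (k : ℕ) : (0 : ℝ) < Nat.fib (3 * (n + k)) := by
    exact_mod_cast Nat.fib_pos.2 (by omega)
  simpa using inv_tsum_sub_mem_Icc_of_telescoping (a := fun k => fibTailApprox (n + k))
    (by norm_num)
    (fun k => fibTailApprox_pos (by omega))
    (tendsto_fibTailApprox_atTop.comp ((tendsto_add_atTop_nat n).congr fun k => add_comm k n))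
    (fun k => by have := hfib k; positivity)
    (fun k => by
      have := hfib k
      rw [inv_mul_eq_div, eq_div_iff (by positivity), ← add_assoc]
      exact fibTailApprox_succ_sub_mul_fib_sq (by omega))

theorem fib_three_reciprocal_square_tail_asymptotic :
    Filter.Tendsto
      (fun n : ℕ =>
        (∑' k : ℕ, (1 : ℝ) / (Nat.fib (3 * (n + k)) : ℝ) ^ 2)⁻¹ -
          ((Nat.fib (3 * n) : ℝ) ^ 2 - (Nat.fib (3 * n - 3) : ℝ) ^ 2 +
            (4 / 9) * (-1 : ℝ) ^ n))
      Filter.atTop (nhds 0) := by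
  have hbounds := (eventually_ne_atTop 0).mono fun _ => inv_tsum_sub_fibTailApprox_mem_Icc
  refine squeeze_zero' (hbounds.mono fun n h => h.1) (hbounds.mono fun n h => h.2) ?_
  exact tendsto_const_nhds.div_atTop (tendsto_fibTailApprox_atTop.comp (tendsto_add_atTop_nat 1))
end

section
/- For the Fibonacci sequence Fₙ, lim_{n→∞} [ (∑_{k=n}^∞ 1/F_k⁴)^{-1} − (F_n⁴ − F_{n−1}⁴ + (2(−1)ⁿ/5)·F_{2n−1} + 2√5/75) ] = 0. -/
/-!
Put `x = ψ ^ (2 n)`, `σ = (-1) ^ n`, and let `T` be the tail sum and `P` the approximant.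
Binet's formula gives `1 / F_k ^ 4 = 25 y ^ 2 / (1 - y) ^ 4` with `y = (-ψ ^ 2) ^ k`; expanding
`(1 - y) ^ (-4)` to second order and summing geometric series gives
`T = x ^ 2 G(σ, x) + O(x ^ 5)` with `G = tailPoly` quadratic in `x`, and `T ≥ 25 x ^ 2 / 16`.
Binet's formula also turns `25 x ^ 2 P` into a quartic `Q(σ, x) = approxPoly σ x` with
`Q G = 25 + O(x ^ 3)`: `P` is the reciprocal of the main term of `T` up to `O(x)`. Hence
`1 / T - P = -(Q (T - x ^ 2 G) + x ^ 2 (Q G - 25)) / (25 x ^ 2 T) = O(x)`.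
-/

open Real Filter Topology
open scoped goldenRatio

namespace Real

lemma goldenRatio_pow_mul_goldenConj_pow (k : ℕ) : φ ^ k * ψ ^ k = (-1) ^ k := by
  rw [← mul_pow, goldenRatio_mul_goldenConj]

lemma sqrt_five_mul_fib (k : ℕ) : √5 * Nat.fib k = φ ^ k - ψ ^ k := by
  rw [coe_fib_eq, mul_div_cancel₀ _ (by positivity)]

lemma five_mul_fib_sq (k : ℕ) :
    5 * (Nat.fib k : ℝ) ^ 2 = φ ^ (2 * k) + ψ ^ (2 * k) - 2 * (-1) ^ k := by
  rw [← goldenRatio_pow_mul_goldenConj_pow, ← sq_sqrt (show (0 : ℝ) ≤ 5 by norm_num),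
    ← mul_pow, sqrt_five_mul_fib]
  ring

lemma five_mul_fib_succ_sq_sub_fib_sq (m : ℕ) :
    5 * ((Nat.fib (m + 1) : ℝ) ^ 2 - Nat.fib m ^ 2) =
      φ ^ (2 * m + 1) + ψ ^ (2 * m + 1) + 4 * (-1) ^ m := by
  rw [mul_sub, five_mul_fib_sq, five_mul_fib_sq]
  linear_combination φ ^ (2 * m) * goldenRatio_sq + ψ ^ (2 * m) * goldenConj_sq

lemma goldenConj_sq_pos : 0 < ψ ^ 2 := sq_pos_of_neg goldenConj_neg

lemma goldenConj_sq_lt_half : ψ ^ 2 < 1 / 2 := by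
  have : 2 < √5 := (lt_sqrt (by norm_num)).mpr (by norm_num)
  rw [goldenConj_sq, goldenConj]
  linarith

lemma goldenConj_sq_pow_le_half {k : ℕ} (hk : k ≠ 0) : (ψ ^ 2) ^ k ≤ 1 / 2 :=
  (pow_le_of_le_one goldenConj_sq_pos.le (by linarith [goldenConj_sq_lt_half]) hk).trans
    goldenConj_sq_lt_half.le

lemma abs_neg_goldenConj_sq_pow_le_half {k : ℕ} (hk : k ≠ 0) : |(-ψ ^ 2) ^ k| ≤ 1 / 2 := by
  rw [abs_pow, abs_neg, abs_of_pos goldenConj_sq_pos]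
  exact goldenConj_sq_pow_le_half hk

lemma abs_goldenConj_pow_lt_one {m : ℕ} (hm : m ≠ 0) : |ψ ^ m| < 1 := by
  rw [abs_pow]
  exact pow_lt_one₀ (abs_nonneg ψ)
    (abs_lt.mpr ⟨neg_one_lt_goldenConj, by linarith [goldenConj_neg]⟩) hm

-- At `k = 0` both sides are `0` (division by zero).
lemma one_div_fib_pow_four (k : ℕ) :
    1 / (Nat.fib k : ℝ) ^ 4 = 25 * ((-ψ ^ 2) ^ k) ^ 2 / (1 - (-ψ ^ 2) ^ k) ^ 4 := by
  have hy : (-ψ ^ 2) ^ k ≠ 0 := pow_ne_zero _ (neg_ne_zero.mpr goldenConj_sq_pos.ne')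
  have hσ : ((-1 : ℝ) ^ k) ^ 2 = 1 := by rw [pow_right_comm, neg_one_sq, one_pow]
  have h25 : √5 ^ 4 = 25 := by
    rw [show √5 ^ 4 = (√5 ^ 2) ^ 2 by ring, sq_sqrt (by norm_num)]; norm_num
  have hbinet : (-1) ^ k * ψ ^ k * (√5 * Nat.fib k) = 1 - (-ψ ^ 2) ^ k := by
    rw [sqrt_five_mul_fib, neg_pow (ψ ^ 2), ← pow_mul]
    linear_combination (-1) ^ k * goldenRatio_pow_mul_goldenConj_pow k + hσ
  have hkey : 25 * (Nat.fib k : ℝ) ^ 4 * ((-ψ ^ 2) ^ k) ^ 2 = (1 - (-ψ ^ 2) ^ k) ^ 4 := by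
    rw [← hbinet, neg_pow (ψ ^ 2), ← pow_mul]
    linear_combination (-25 * ψ ^ (4 * k) * (Nat.fib k : ℝ) ^ 4 * ((-1) ^ k) ^ 2) * hσ
      - (((-1) ^ k) ^ 4 * ψ ^ (4 * k) * (Nat.fib k : ℝ) ^ 4) * h25
  rw [← hkey, mul_right_comm,
    div_mul_cancel_left₀ (mul_ne_zero (by norm_num) (pow_ne_zero 2 hy)), one_div]

end Real

lemma abs_one_div_one_sub_pow_four_sub_le {y : ℝ} (hy : |y| ≤ 1 / 2) :
    |1 / (1 - y) ^ 4 - (1 + 4 * y + 10 * y ^ 2)| ≤ 1000 * |y| ^ 3 := by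
  obtain ⟨hy₁, hy₂⟩ := abs_le.mp hy
  have hden : 1 / 16 ≤ (1 - y) ^ 4 := by
    calc (1 : ℝ) / 16 = (1 / 2) ^ 4 := by norm_num
      _ ≤ (1 - y) ^ 4 := pow_le_pow_left₀ (by norm_num) (by linarith) 4
  have hpos : 0 < (1 - y) ^ 4 := lt_of_lt_of_le (by norm_num) hden
  have hnum : |20 - 45 * y + 36 * y ^ 2 - 10 * y ^ 3| ≤ 53 := by
    rw [abs_le]; constructor <;> nlinarith
  have heq : 1 / (1 - y) ^ 4 - (1 + 4 * y + 10 * y ^ 2) =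
      y ^ 3 * (20 - 45 * y + 36 * y ^ 2 - 10 * y ^ 3) / (1 - y) ^ 4 := by
    field_simp [show 1 - y ≠ 0 by linarith]
    ring
  rw [heq, abs_div, abs_mul, abs_pow, abs_of_pos hpos, div_le_iff₀ hpos]
  calc |y| ^ 3 * |20 - 45 * y + 36 * y ^ 2 - 10 * y ^ 3| ≤ |y| ^ 3 * 53 := by gcongr
    _ ≤ 1000 * |y| ^ 3 * (1 / 16) := by nlinarith [pow_nonneg (abs_nonneg y) 3]
    _ ≤ 1000 * |y| ^ 3 * (1 - y) ^ 4 := by gcongr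

lemma abs_one_div_fib_pow_four_sub_le {k : ℕ} (hk : k ≠ 0) :
    |1 / (Nat.fib k : ℝ) ^ 4 - (25 * (ψ ^ 4) ^ k + 100 * (-ψ ^ 6) ^ k + 250 * (ψ ^ 8) ^ k)| ≤
      25000 * (ψ ^ 10) ^ k := by
  set y := (-ψ ^ 2) ^ k with hy
  have hyabs : |y| = (ψ ^ 2) ^ k := by rw [abs_pow, abs_neg, abs_of_pos goldenConj_sq_pos]
  have hpow (m : ℕ) : y ^ m = ((-ψ ^ 2) ^ m) ^ k := pow_right_comm _ _ _
  rw [show ψ ^ 4 = (-ψ ^ 2) ^ 2 by ring, show -ψ ^ 6 = (-ψ ^ 2) ^ 3 by ring,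
    show ψ ^ 8 = (-ψ ^ 2) ^ 4 by ring, show ψ ^ 10 = (ψ ^ 2) ^ 5 by ring, pow_right_comm _ 5,
    ← hyabs, ← hpow, ← hpow, ← hpow, one_div_fib_pow_four, ← hy]
  calc |25 * y ^ 2 / (1 - y) ^ 4 - (25 * y ^ 2 + 100 * y ^ 3 + 250 * y ^ 4)|
      = 25 * |y| ^ 2 * |1 / (1 - y) ^ 4 - (1 + 4 * y + 10 * y ^ 2)| := by
        rw [← abs_pow, ← abs_of_pos (show (0 : ℝ) < 25 by norm_num), ← abs_mul, ← abs_mul]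
        congr 1
        ring
    _ ≤ 25 * |y| ^ 2 * (1000 * |y| ^ 3) := by
        gcongr
        exact abs_one_div_one_sub_pow_four_sub_le (abs_neg_goldenConj_sq_pow_le_half hk)
    _ = 25000 * |y| ^ 5 := by ring

lemma HasSum.summable_and_norm_tsum_sub_le {E : Type*} [NormedAddCommGroup E] [CompleteSpace E]
    {f g : ℕ → E} {a : E} {C r : ℝ} (hg : HasSum g a) (hr₀ : 0 ≤ r) (hr₁ : r < 1)
    (hfg : ∀ k, ‖f k - g k‖ ≤ C * r ^ k) :
    Summable f ∧ ‖∑' k, f k - a‖ ≤ C / (1 - r) := by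
  have hgeom : HasSum (fun k => C * r ^ k) (C / (1 - r)) := by
    simpa only [div_eq_mul_inv] using (hasSum_geometric_of_lt_one hr₀ hr₁).mul_left C
  have hf : Summable f := by
    simpa using (hgeom.summable.of_norm_bounded hfg).add hg.summable
  refine ⟨hf, ?_⟩
  rw [← hg.tsum_eq, ← hf.tsum_sub hg.summable]
  exact tsum_of_norm_bounded (f := fun k => f k - g k) hgeom hfg

lemma hasSum_pow_add {K : Type*} [NormedDivisionRing K] [CompleteSpace K] {r : K} (hr : ‖r‖ < 1)
    (n : ℕ) : HasSum (fun k => r ^ (n + k)) (r ^ n / (1 - r)) := by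
  simpa only [pow_add, div_eq_mul_inv] using (hasSum_geometric_of_norm_lt_one hr).mul_left (r ^ n)

noncomputable def fibTail (n : ℕ) : ℝ := ∑' k : ℕ, 1 / (Nat.fib (n + k) : ℝ) ^ 4

noncomputable def tailPoly (σ x : ℝ) : ℝ :=
  25 / (1 - ψ ^ 4) + 100 / (1 + ψ ^ 6) * σ * x + 250 / (1 - ψ ^ 8) * x ^ 2

lemma hasSum_tailPoly (n : ℕ) :
    HasSum (fun k => 25 * (ψ ^ 4) ^ (n + k) + 100 * (-ψ ^ 6) ^ (n + k) + 250 * (ψ ^ 8) ^ (n + k))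
      (((ψ ^ 2) ^ n) ^ 2 * tailPoly ((-1) ^ n) ((ψ ^ 2) ^ n)) := by
  have h4 := (hasSum_pow_add (r := ψ ^ 4) (abs_goldenConj_pow_lt_one (by norm_num)) n).mul_left 25
  have h6 := (hasSum_pow_add (r := -ψ ^ 6)
    ((abs_neg (ψ ^ 6)).symm ▸ abs_goldenConj_pow_lt_one (by norm_num)) n).mul_left 100
  have h8 := (hasSum_pow_add (r := ψ ^ 8) (abs_goldenConj_pow_lt_one (by norm_num)) n).mul_left 250
  have hsum : 25 * ((ψ ^ 4) ^ n / (1 - ψ ^ 4)) + 100 * ((-ψ ^ 6) ^ n / (1 - -ψ ^ 6)) +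
      250 * ((ψ ^ 8) ^ n / (1 - ψ ^ 8)) =
        ((ψ ^ 2) ^ n) ^ 2 * tailPoly ((-1) ^ n) ((ψ ^ 2) ^ n) := by
    rw [tailPoly, neg_pow, show ψ ^ 4 = (ψ ^ 2) ^ 2 by ring, show ψ ^ 6 = (ψ ^ 2) ^ 3 by ring,
      show ψ ^ 8 = (ψ ^ 2) ^ 4 by ring, pow_right_comm _ 2, pow_right_comm _ 3,
      pow_right_comm _ 4]
    ring
  exact hsum ▸ (h4.add h6).add h8

lemma summable_and_abs_fibTail_sub_le {n : ℕ} (hn : n ≠ 0) :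
    Summable (fun k => 1 / (Nat.fib (n + k) : ℝ) ^ 4) ∧
      |fibTail n - ((ψ ^ 2) ^ n) ^ 2 * tailPoly ((-1) ^ n) ((ψ ^ 2) ^ n)| ≤
        50000 * ((ψ ^ 2) ^ n) ^ 5 := by
  have hψ10 : ψ ^ 10 = (ψ ^ 2) ^ 5 := by ring
  have hr : ψ ^ 10 ≤ 1 / 2 := hψ10 ▸ goldenConj_sq_pow_le_half (by norm_num)
  obtain ⟨hs, hle⟩ := (hasSum_tailPoly n).summable_and_norm_tsum_sub_le
    (C := 25000 * (ψ ^ 10) ^ n) (r := ψ ^ 10) (by positivity) (by linarith) fun k => by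
      rw [mul_assoc, ← pow_add]; exact abs_one_div_fib_pow_four_sub_le (by omega)
  refine ⟨hs, hle.trans ?_⟩
  rw [div_le_iff₀ (by linarith), hψ10, pow_right_comm]
  nlinarith [pow_nonneg (pow_nonneg goldenConj_sq_pos.le n) 5]

lemma mul_sq_goldenConj_sq_pow_le_fibTail {n : ℕ} (hn : n ≠ 0) :
    25 / 16 * ((ψ ^ 2) ^ n) ^ 2 ≤ fibTail n := by
  have hfirst : 1 / (Nat.fib n : ℝ) ^ 4 ≤ fibTail n :=
    (summable_and_abs_fibTail_sub_le hn).1.le_tsum 0 (fun _ _ => by positivity)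
  obtain ⟨hy₁, hy₂⟩ := abs_le.mp (abs_neg_goldenConj_sq_pow_le_half hn)
  rw [one_div_fib_pow_four, ← pow_mul, (show Even (n * 2) from ⟨n, by ring⟩).neg_pow,
    pow_mul] at hfirst
  refine le_trans ?_ hfirst
  rw [div_mul_eq_mul_div, mul_comm]
  gcongr
  · exact pow_pos (by linarith) 4
  · calc (1 - (-ψ ^ 2) ^ n) ^ 4 ≤ (3 / 2) ^ 4 := by gcongr <;> linarith
      _ ≤ 16 := by norm_num

noncomputable def fibApprox (n : ℕ) : ℝ :=
  (Nat.fib n : ℝ) ^ 4 - (Nat.fib (n - 1) : ℝ) ^ 4 +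
    (2 * (-1 : ℝ) ^ n / 5) * (Nat.fib (2 * n - 1) : ℝ) + 2 * √5 / 75

noncomputable def approxPoly (σ x : ℝ) : ℝ :=
  √5 * (ψ ^ 2 + 2 * σ * ψ * x + 2 / 3 * x ^ 2 - 2 * σ * φ * x ^ 3 - φ ^ 2 * x ^ 4)

lemma twentyFive_mul_sq_mul_fibApprox {n : ℕ} (hn : n ≠ 0) :
    25 * ((ψ ^ 2) ^ n) ^ 2 * fibApprox n = approxPoly ((-1) ^ n) ((ψ ^ 2) ^ n) := by
  obtain ⟨m, rfl⟩ := Nat.exists_eq_succ_of_ne_zero hn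
  -- `F_{m+1}^4 - F_m^4 = (F_{m+1}^2 - F_m^2) F_{2m+1}` leaves only `φ^(2m+1)` and `ψ^(2m+1)`.
  have hsq := five_mul_fib_succ_sq_sub_fib_sq m
  have hodd : (Nat.fib (2 * m + 1) : ℝ) = Nat.fib (m + 1) ^ 2 + Nat.fib m ^ 2 := by
    exact_mod_cast Nat.fib_two_mul_add_one m
  have hbinet := sqrt_five_mul_fib (2 * m + 1)
  have hzw : φ ^ (2 * m + 1) * ψ ^ (2 * m + 1) = -1 := by
    rw [goldenRatio_pow_mul_goldenConj_pow, Odd.neg_one_pow ⟨m, rfl⟩]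
  have h5 : √5 ^ 2 = 5 := sq_sqrt (by norm_num)
  rw [fibApprox, approxPoly, Nat.succ_sub_one, show 2 * (m + 1) - 1 = 2 * m + 1 by omega,
    show (ψ ^ 2) ^ (m + 1) = ψ * ψ ^ (2 * m + 1) by rw [← pow_mul, ← pow_succ']; ring,
    pow_succ (-1 : ℝ) m]
  generalize φ ^ (2 * m + 1) = z at *
  generalize ψ ^ (2 * m + 1) = w at *
  generalize (-1 : ℝ) ^ m = τ at *
  grind

noncomputable def defectPoly (σ x : ℝ) : ℝ :=
  -(1100 + 550 * √5) / 3 * σ - (4375 / 18 + 625 * √5 / 6) * x -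
    (3575 + 1625 * √5) / 3 * σ * x ^ 2 - (750 + 1000 * √5 / 3) * x ^ 3

lemma approxPoly_mul_tailPoly {σ : ℝ} (hσ : σ ^ 2 = 1) (x : ℝ) :
    approxPoly σ x * tailPoly σ x = 25 + x ^ 3 * defectPoly σ x := by
  have h4 : 1 - ψ ^ 4 ≠ 0 :=
    (sub_pos.mpr (abs_lt.mp (abs_goldenConj_pow_lt_one (by norm_num))).2).ne'
  have h6 : 1 + ψ ^ 6 ≠ 0 := by positivity
  have h8 : 1 - ψ ^ 8 ≠ 0 :=
    (sub_pos.mpr (abs_lt.mp (abs_goldenConj_pow_lt_one (by norm_num))).2).ne'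
  have h5 : √5 ^ 2 = 5 := sq_sqrt (by norm_num)
  rw [approxPoly, tailPoly, defectPoly]
  grind

lemma exists_abs_le_on_square {f : ℝ → ℝ → ℝ}
    (hf : Continuous fun p : ℝ × ℝ => f p.1 p.2) :
    ∃ C, ∀ σ x, |σ| ≤ 1 → |x| ≤ 1 → |f σ x| ≤ C := by
  obtain ⟨C, hC⟩ := IsCompact.exists_bound_of_continuousOn
    (isCompact_Icc.prod (isCompact_Icc (a := (-1 : ℝ)) (b := 1))) hf.continuousOn
  exact ⟨C, fun σ x hσ hx => hC (σ, x) ⟨abs_le.mp hσ, abs_le.mp hx⟩⟩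

lemma exists_abs_inv_fibTail_sub_fibApprox_le :
    ∃ K, ∀ n ≠ 0, |(fibTail n)⁻¹ - fibApprox n| ≤ K * (ψ ^ 2) ^ n := by
  obtain ⟨A, hA⟩ := exists_abs_le_on_square (f := approxPoly) (by unfold approxPoly; fun_prop)
  obtain ⟨B, hB⟩ := exists_abs_le_on_square (f := defectPoly) (by unfold defectPoly; fun_prop)
  refine ⟨16 / 625 * (50000 * A + B), fun n hn => ?_⟩
  have hx₀ : 0 < (ψ ^ 2) ^ n := pow_pos goldenConj_sq_pos n
  have hx₁ : |(ψ ^ 2) ^ n| ≤ 1 := by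
    rw [abs_of_pos hx₀]
    exact pow_le_one₀ goldenConj_sq_pos.le (by linarith [goldenConj_sq_lt_half])
  have hσ₁ : |(-1 : ℝ) ^ n| ≤ 1 := by simp
  have hσ : ((-1 : ℝ) ^ n) ^ 2 = 1 := by rw [pow_right_comm, neg_one_sq, one_pow]
  have hT := mul_sq_goldenConj_sq_pow_le_fibTail hn
  have hE := (summable_and_abs_fibTail_sub_le hn).2
  have hP := twentyFive_mul_sq_mul_fibApprox hn
  have hPT := approxPoly_mul_tailPoly hσ ((ψ ^ 2) ^ n)
  have hA' := hA _ _ hσ₁ hx₁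
  have hB' := hB _ _ hσ₁ hx₁
  generalize (ψ ^ 2) ^ n = x at *
  generalize (-1 : ℝ) ^ n = σ at *
  generalize fibTail n = T at *
  have hT₀ : 0 < T := lt_of_lt_of_le (by positivity) hT
  have hden : 0 < 25 * x ^ 2 * T := by positivity
  have hkey : T⁻¹ - fibApprox n =
      -(approxPoly σ x * (T - x ^ 2 * tailPoly σ x) + x ^ 5 * defectPoly σ x) /
        (25 * x ^ 2 * T) := by
    rw [eq_div_iff hden.ne']
    linear_combination 25 * x ^ 2 * inv_mul_cancel₀ hT₀.ne' - T * hP - x ^ 2 * hPT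
  have hAB : 0 ≤ 50000 * A + B := by
    linarith [(abs_nonneg _).trans hA', (abs_nonneg _).trans hB']
  rw [hkey, abs_div, abs_neg, abs_of_pos hden, div_le_iff₀ hden]
  calc |approxPoly σ x * (T - x ^ 2 * tailPoly σ x) + x ^ 5 * defectPoly σ x|
      ≤ A * (50000 * x ^ 5) + x ^ 5 * B := by
        refine (abs_add_le _ _).trans (add_le_add ?_ ?_) <;> rw [abs_mul]
        · exact mul_le_mul hA' hE (abs_nonneg _) ((abs_nonneg _).trans hA')
        · rw [abs_of_pos (by positivity)]; exact mul_le_mul_of_nonneg_left hB' (by positivity)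
    _ = 16 / 625 * (50000 * A + B) * x * (25 * x ^ 2 * (25 / 16 * x ^ 2)) := by ring
    _ ≤ 16 / 625 * (50000 * A + B) * x * (25 * x ^ 2 * T) := by
        have : 0 ≤ 16 / 625 * (50000 * A + B) * x := by positivity
        gcongr

theorem fib_reciprocal_fourth_tail_asymptotic :
    Filter.Tendsto
      (fun n : ℕ =>
        (∑' k : ℕ, (1 : ℝ) / (Nat.fib (n + k) : ℝ) ^ 4)⁻¹ -
          ((Nat.fib n : ℝ) ^ 4 - (Nat.fib (n - 1) : ℝ) ^ 4 +
            (2 * (-1 : ℝ) ^ n / 5) * (Nat.fib (2 * n - 1) : ℝ) +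
            2 * Real.sqrt 5 / 75))
      Filter.atTop (nhds 0) := by
  obtain ⟨K, hK⟩ := exists_abs_inv_fibTail_sub_fibApprox_le
  refine squeeze_zero_norm' (a := fun n => K * (ψ ^ 2) ^ n) ?_ ?_
  · filter_upwards [eventually_ne_atTop 0] with n hn using hK n hn
  · simpa using (tendsto_pow_atTop_nhds_zero_of_lt_one goldenConj_sq_pos.le
      (by linarith [goldenConj_sq_lt_half])).const_mul K
end

section
/- Let α > 1 > |β| ≥ 0 be reals, c₁ ≠ 0, c₂ reals, d a positive integer, and Wₙ = c₁αⁿ − c₂βⁿ. Then there is a constant C such that for all sufficiently large N, | 1/W_N^d − (1/c₁^d)·( 1/α^{dN} + ∑_{i=1}^{d−1} C(d−1+i,d−1)·(c₂/c₁)^i·β^{iN}/α^{(d+i)N} ) | ≤ C·|β|^{dN}/α^{2dN}. -/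
/-!
Write `W N = c₁ αᴺ (1 - x)` with `x = (c₂ / c₁) (β / α)ᴺ`, which tends to `0`. The expansion in
the statement is `(c₁ αᴺ)⁻ᵈ` times the first `d` terms of the negative binomial series
`(1 - x)⁻ᵈ = ∑ C(n + d - 1, d - 1) xⁿ`. Since `C(n + d - 1, d - 1) ≤ 2ⁿ⁺ᵈ⁻¹`, the tail from `n = d`
on is dominated by a geometric series and is at most `4ᵈ |x|ᵈ` once `|x| ≤ 1/4`; and
`(c₁ αᴺ)⁻ᵈ |x|ᵈ` is a constant multiple of `|β|ᵈᴺ / α²ᵈᴺ`.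
-/

open Finset Filter

lemma norm_choose_mul_pow_add_le {𝕜 : Type*} [NormedDivisionRing 𝕜] (k n : ℕ) {x : 𝕜}
    (hx : ‖x‖ ≤ 1 / 4) :
    ‖((n + (k + 1) + k).choose k : 𝕜) * x ^ (n + (k + 1))‖ ≤
      4 ^ (k + 1) * ‖x‖ ^ (k + 1) / 2 / 2 ^ n := by
  have hchoose : ‖((n + (k + 1) + k).choose k : 𝕜)‖ ≤ 2 ^ (n + 2 * k + 1) := by
    refine (Nat.norm_cast_le _).trans ?_
    rw [norm_one, mul_one]
    exact_mod_cast (Nat.choose_le_two_pow _ _).trans_eq (by ring_nf)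
  have hpow : ‖x‖ ^ n ≤ (1 / 4) ^ n := pow_le_pow_left₀ (norm_nonneg x) hx n
  calc ‖((n + (k + 1) + k).choose k : 𝕜) * x ^ (n + (k + 1))‖
      ≤ 2 ^ (n + 2 * k + 1) * (‖x‖ ^ (k + 1) * (1 / 4) ^ n) := by
        rw [norm_mul, norm_pow, pow_add, mul_comm (‖x‖ ^ n)]
        gcongr
    _ = 4 ^ (k + 1) * ‖x‖ ^ (k + 1) / 2 / 2 ^ n := by
        rw [show (4 : ℝ) = 2 ^ 2 by norm_num, ← pow_mul, one_div_pow, ← pow_mul]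
        field_simp
        ring

lemma norm_one_div_one_sub_pow_sub_sum_le {𝕜 : Type*} [NormedDivisionRing 𝕜] (k : ℕ) {x : 𝕜}
    (hx : ‖x‖ ≤ 1 / 4) :
    ‖1 / (1 - x) ^ (k + 1) - ∑ i ∈ range (k + 1), ((i + k).choose k : 𝕜) * x ^ i‖ ≤
      4 ^ (k + 1) * ‖x‖ ^ (k + 1) := by
  have hseries := hasSum_choose_mul_geometric_of_norm_lt_one k (hx.trans_lt (by norm_num))
  have htail := (hasSum_nat_add_iff (f := fun n ↦ ((n + k).choose k : 𝕜) * x ^ n) (k + 1)).2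
    (by rwa [sub_add_cancel])
  rw [← htail.tsum_eq]
  exact tsum_of_norm_bounded (hasSum_geometric_two' _) fun n ↦ norm_choose_mul_pow_add_le k n hx

lemma one_div_mul_sub_mul_pow_eq {K : Type*} [Field K] {a c₁ : K} (ha : a ≠ 0) (hc₁ : c₁ ≠ 0)
    (b c₂ : K) (d : ℕ) :
    1 / (c₁ * a - c₂ * b) ^ d = 1 / (c₁ * a) ^ d * (1 / (1 - c₂ / c₁ * (b / a)) ^ d) := by
  rw [div_mul_div_comm, one_mul, ← mul_pow]
  congr 2
  field_simp

lemma horadam_main_term_eq {K : Type*} [Field K] {a c₁ : K} (ha : a ≠ 0) (hc₁ : c₁ ≠ 0)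
    (b c₂ : K) (k : ℕ) :
    1 / c₁ ^ (k + 1) * (1 / a ^ (k + 1) +
        ∑ i ∈ Icc 1 k, ((k + i).choose k : K) * (c₂ / c₁) ^ i * (b ^ i / a ^ (k + 1 + i))) =
      1 / (c₁ * a) ^ (k + 1) *
        ∑ i ∈ range (k + 1), ((i + k).choose k : K) * (c₂ / c₁ * (b / a)) ^ i := by
  rw [range_eq_Ico, sum_eq_sum_Ico_succ_bot (by omega : 0 < k + 1), zero_add, zero_add,
    ← Ico_add_one_right_eq_Icc, mul_add, mul_add, mul_sum, mul_sum]
  congr 1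
  · rw [mul_pow, one_div_mul_one_div, pow_zero, Nat.choose_self, Nat.cast_one, mul_one, mul_one]
  · refine sum_congr rfl fun i _ ↦ ?_
    rw [add_comm k i, mul_pow (c₂ / c₁), div_pow, div_pow, pow_add]
    field_simp
    ring

theorem horadam_power_reciprocal_expansion
    (α β c₁ c₂ : ℝ) (hα : 1 < α) (hβ : |β| < 1) (hc₁ : c₁ ≠ 0)
    (d : ℕ) (hd : 0 < d) (W : ℕ → ℝ) (hW : ∀ n, W n = c₁ * α ^ n - c₂ * β ^ n) :
    ∃ C : ℝ, ∃ N₀ : ℕ, ∀ N ≥ N₀,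
      |1 / (W N) ^ d -
          (1 / c₁ ^ d) *
            (1 / α ^ (d * N) +
              ∑ i ∈ Finset.Icc 1 (d - 1),
                ((d - 1 + i).choose (d - 1) : ℝ) * (c₂ / c₁) ^ i *
                  (β ^ (i * N) / α ^ ((d + i) * N)))| ≤
        C * |β| ^ (d * N) / α ^ (2 * d * N) := by
  obtain ⟨k, rfl⟩ := Nat.exists_eq_add_one_of_ne_zero hd.ne'
  have hα₀ : 0 < α := by linarith
  have hratio : |β / α| < 1 := by
    rw [abs_div, abs_of_pos hα₀, div_lt_one hα₀]
    linarith
  have hsmall : Tendsto (fun N : ℕ ↦ c₂ / c₁ * (β / α) ^ N) atTop (nhds 0) := by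
    simpa using (tendsto_pow_atTop_nhds_zero_of_abs_lt_one hratio).const_mul (c₂ / c₁)
  obtain ⟨N₀, hN₀⟩ := Metric.tendsto_atTop.1 hsmall (1 / 4) (by norm_num)
  refine ⟨4 ^ (k + 1) * |c₂ / c₁| ^ (k + 1) / |c₁| ^ (k + 1), N₀, fun N hN ↦ ?_⟩
  have hx : ‖c₂ / c₁ * (β ^ N / α ^ N)‖ ≤ 1 / 4 := by
    rw [← div_pow, ← dist_zero_right]
    exact (hN₀ N hN).le
  have hαN : α ^ N ≠ 0 := by positivity
  simp only [hW, pow_mul', add_tsub_cancel_right]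
  rw [horadam_main_term_eq hαN hc₁, one_div_mul_sub_mul_pow_eq hαN hc₁, ← mul_sub, abs_mul]
  calc _ ≤ |1 / (c₁ * α ^ N) ^ (k + 1)| * (4 ^ (k + 1) * ‖c₂ / c₁ * (β ^ N / α ^ N)‖ ^ (k + 1)) :=
        mul_le_mul_of_nonneg_left (norm_one_div_one_sub_pow_sub_sum_le k hx) (abs_nonneg _)
    _ = _ := by
        simp only [Real.norm_eq_abs, abs_div, abs_mul, abs_pow, abs_one, abs_of_pos hα₀, mul_pow,
          div_pow]
        field_simp
end

section
/- Let Wₙ = c₁αⁿ − c₂βⁿ with α > 1 > |β|, c₁ > 0 reals, m a positive integer, l ≥ 1−m an integer, d a positive integer. Then lim_{n→∞} (∑_{k=n}^∞ 1/W_{mk+l}^d)^{-1} · α^{−d(mn+l)} = c₁^d·(α^{md} − 1)/α^{md}. -/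
/-!
Dividing the `k`-th term of the tail by `α ^ (d * (m * n + l))` turns it into `r ^ k * g j` with
`r = α ^ (-m * d)`, `j = m * (n + k) + l` and `g j = (α ^ j / W j) ^ d`. Since `|β / α| < 1`,
`g j → c₁⁻¹ ^ d`, so by Tannery's theorem (a geometric majorant for the terms) the normalised tail
tends to `(1 - r)⁻¹ * c₁⁻¹ ^ d`, whose inverse is the claimed limit.
-/

open Filter Topology

theorem tendsto_zpow_atTop_nhds_zero_of_norm_lt_one {K : Type*} [NormedDivisionRing K] {q : K}
    (hq : ‖q‖ < 1) : Tendsto (fun j : ℤ => q ^ j) atTop (𝓝 0) := by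
  rw [← Nat.map_cast_int_atTop, tendsto_map'_iff]
  simpa only [Function.comp_def, zpow_natCast] using tendsto_pow_atTop_nhds_zero_of_norm_lt_one hq

theorem tendsto_sub_mul_zpow_div_zpow_atTop {K : Type*} [NormedField K] {α β : K} (c₁ c₂ : K)
    (hβα : ‖β‖ < ‖α‖) :
    Tendsto (fun j : ℤ => (c₁ * α ^ j - c₂ * β ^ j) / α ^ j) atTop (𝓝 c₁) := by
  have hα : α ≠ 0 := norm_pos_iff.mp ((norm_nonneg β).trans_lt hβα)
  have hq : ‖β / α‖ < 1 := by
    rwa [norm_div, div_lt_one ((norm_nonneg β).trans_lt hβα)]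
  have h := tendsto_const_nhds (x := c₁) |>.sub
    ((tendsto_zpow_atTop_nhds_zero_of_norm_lt_one hq).const_mul c₂)
  rw [mul_zero, sub_zero] at h
  refine h.congr fun j => ?_
  rw [div_zpow, sub_div, mul_div_cancel_right₀ _ (zpow_ne_zero j hα), mul_div_assoc]

theorem tendsto_tsum_geometric_mul_shift {K : Type*} [NormedDivisionRing K] [CompleteSpace K]
    {u : ℕ → K} {L r : K} (hu : Tendsto u atTop (𝓝 L)) (hr : ‖r‖ < 1) :
    Tendsto (fun n => ∑' k, r ^ k * u (n + k)) atTop (𝓝 ((1 - r)⁻¹ * L)) := by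
  obtain ⟨N, hN⟩ := eventually_atTop.mp (hu.norm.eventually_le_const (lt_add_one ‖L‖))
  have hbound : ∀ᶠ n in atTop, ∀ k, ‖r ^ k * u (n + k)‖ ≤ ‖r‖ ^ k * (‖L‖ + 1) := by
    filter_upwards [eventually_ge_atTop N] with n hn k
    rw [norm_mul, norm_pow]
    exact mul_le_mul_of_nonneg_left (hN _ (by omega)) (by positivity)
  have hlim := tendsto_tsum_of_dominated_convergence
    ((summable_geometric_of_lt_one (norm_nonneg r) hr).mul_right _)
    (fun k => (hu.comp (tendsto_add_atTop_nat k)).const_mul (r ^ k)) hbound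
  rwa [tsum_mul_right, tsum_geometric_of_norm_lt_one hr] at hlim

theorem one_div_pow_mul_zpow_eq {K : Type*} [Field K] {α : K} (hα : α ≠ 0) (w : K)
    (m d k : ℕ) (e : ℤ) :
    1 / w ^ d * α ^ ((d : ℤ) * e) = (α ^ (m * d))⁻¹ ^ k * (α ^ ((m : ℤ) * k + e) / w) ^ d := by
  have hexp : α ^ ((d : ℤ) * e) = (α ^ (m * d))⁻¹ ^ k * (α ^ ((m : ℤ) * k + e)) ^ d := by
    rw [← zpow_natCast α (m * d), ← zpow_neg, ← zpow_natCast _ k, ← zpow_mul,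
      ← zpow_natCast _ d, ← zpow_mul, ← zpow_add₀ hα]
    congr 1
    push_cast
    ring
  rw [hexp, div_pow]
  ring

theorem horadam_tail_inverse_leading_order_general
    (α β c₁ c₂ : ℝ) (hα : 1 < α) (hβ : |β| < 1) (hc₁ : 0 < c₁)
    (m : ℕ) (hm : 0 < m) (l : ℤ) (d : ℕ) (hd : 0 < d)
    (W : ℤ → ℝ) (hW : ∀ n : ℤ, W n = c₁ * α ^ n - c₂ * β ^ n) :
    Filter.Tendsto
      (fun n : ℕ =>
        (∑' k : ℕ, 1 / (W ((m : ℤ) * ((n : ℤ) + (k : ℤ)) + l)) ^ d)⁻¹ *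
          α ^ (-(d : ℤ) * ((m : ℤ) * (n : ℤ) + l)))
      Filter.atTop (nhds (c₁ ^ d * (α ^ (m * d) - 1) / α ^ (m * d))) := by
  have hα₀ : 0 < α := zero_lt_one.trans hα
  set r : ℝ := (α ^ (m * d))⁻¹ with hr_def
  have hr₀ : 0 ≤ r := by positivity
  have hr₁ : r < 1 := inv_lt_one_of_one_lt₀ (one_lt_pow₀ hα (by positivity))
  set g : ℤ → ℝ := fun j => (α ^ j / W j) ^ d
  have hg : Tendsto g atTop (𝓝 (c₁⁻¹ ^ d)) := by
    have hratio : Tendsto (fun j : ℤ => W j / α ^ j) atTop (𝓝 c₁) := by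
      simpa only [hW] using tendsto_sub_mul_zpow_div_zpow_atTop c₁ c₂
        (by rw [Real.norm_eq_abs, Real.norm_of_nonneg hα₀.le]; linarith)
    simpa only [g, inv_div] using (hratio.inv₀ hc₁.ne').pow d
  have hindex : Tendsto (fun n : ℕ => (m : ℤ) * n + l) atTop atTop :=
    tendsto_atTop_add_const_right _ l
      (tendsto_natCast_atTop_atTop.const_mul_atTop' (by exact_mod_cast hm))
  have hlim_pos : 0 < (1 - r)⁻¹ * c₁⁻¹ ^ d := mul_pos (inv_pos.2 (sub_pos.2 hr₁)) (by positivity)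
  have hsum := (tendsto_tsum_geometric_mul_shift (hg.comp hindex)
    (by rwa [Real.norm_of_nonneg hr₀])).inv₀ hlim_pos.ne'
  convert hsum using 2 with n
  · rw [neg_mul, zpow_neg, ← mul_inv, ← tsum_mul_right]
    congr 2 with k
    have hidx : (m : ℤ) * ((n : ℤ) + k) + l = m * k + (m * n + l) := by ring
    simp only [Function.comp_apply, g, Nat.cast_add, hidx]
    exact one_div_pow_mul_zpow_eq hα₀.ne' _ m d k _
  · rw [mul_inv, inv_inv, inv_pow, inv_inv, hr_def]
    field_simp

theorem horadam_tail_inverse_leading_order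
    (α β c₁ c₂ : ℝ) (hα : 1 < α) (hβ : |β| < 1) (hc₁ : 0 < c₁)
    (m : ℕ) (hm : 0 < m) (l : ℤ) (hl : 1 - (m : ℤ) ≤ l) (d : ℕ) (hd : 0 < d)
    (W : ℤ → ℝ) (hW : ∀ n : ℤ, W n = c₁ * α ^ n - c₂ * β ^ n) :
    Filter.Tendsto
      (fun n : ℕ =>
        (∑' k : ℕ, 1 / (W ((m : ℤ) * ((n : ℤ) + (k : ℤ)) + l)) ^ d)⁻¹ *
          α ^ (-(d : ℤ) * ((m : ℤ) * (n : ℤ) + l)))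
      Filter.atTop (nhds (c₁ ^ d * (α ^ (m * d) - 1) / α ^ (m * d))) :=
  horadam_tail_inverse_leading_order_general α β c₁ c₂ hα hβ hc₁ m hm l d hd W hW
end
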